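/- arXiv:2008.00540 — 12 statements merged into one kernel-verified Lean document; each statement's English description precedes it below -/
import Mathlib

section
/- For any bimatrix game (A, B) with A, B real n×m matrices, and any probability vectors x ∈ Δⁿ, y ∈ Δᵐ, the function C_{(A,B)}(x,y) := -Σ_{j,k} x_j y_k (A_{jk} - (Ay)_j)(B_{jk} - (Bᵀx)_k) satisfies C_{(A,B)}(x,y) = C_{(Z,-Z)}(x,y) + C_{(C,C)}(x,y), where Z = (A - B)/2 and C = (A + B)/2. -/
open Finset Matrix

noncomputable def Cfun {n m : ℕ} (A B : Matrix (Fin n) (Fin m) ℝ)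
    (x : Fin n → ℝ) (y : Fin m → ℝ) : ℝ :=
  -∑ j, ∑ k, x j * y k * (A j k - ∑ k', A j k' * y k') * (B j k - ∑ j', B j' k * x j')

def IsProbVec {n : ℕ} (x : Fin n → ℝ) : Prop :=
  (∀ j, 0 ≤ x j) ∧ ∑ j, x j = 1


lemma Cbil {n m : ℕ} (M N : Matrix (Fin n) (Fin m) ℝ) (x : Fin n → ℝ) (y : Fin m → ℝ)
    (a b c d : ℝ) :
    Cfun (a • M + b • N) (c • M + d • N) x y =
      a*c * Cfun M M x y + a*d * Cfun M N x y + b*c * Cfun N M x y + b*d * Cfun N N x y := by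
  unfold Cfun
  have h1 : ∀ j k, (a • M + b • N) j k = a * M j k + b * N j k := by
    intro j k; simp
  have h2 : ∀ j k, (c • M + d • N) j k = c * M j k + d * N j k := by
    intro j k; simp
  have s1 : ∀ j, ∑ k', (a • M + b • N) j k' * y k'
      = a * (∑ k', M j k' * y k') + b * (∑ k', N j k' * y k') := by
    intro j
    simp only [h1, add_mul, mul_assoc, Finset.sum_add_distrib, ← Finset.mul_sum]
  have s2 : ∀ k, ∑ j', (c • M + d • N) j' k * x j'
      = c * (∑ j', M j' k * x j') + d * (∑ j', N j' k * x j') := by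
    intro k
    simp only [h2, add_mul, mul_assoc, Finset.sum_add_distrib, ← Finset.mul_sum]
  simp only [mul_neg, ← neg_add, neg_inj, Finset.mul_sum, ← Finset.sum_add_distrib]
  refine Finset.sum_congr rfl fun j _ => Finset.sum_congr rfl fun k _ => ?_
  rw [h1, h2, s1, s2]
  ring

lemma Cexp {n m : ℕ} (A B : Matrix (Fin n) (Fin m) ℝ) (x : Fin n → ℝ) (y : Fin m → ℝ) :
    Cfun A B x y =
      -((∑ j, ∑ k, x j * y k * A j k * B j k)
        - (∑ k, y k * (∑ j, A j k * x j) * (∑ j, B j k * x j))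
        - (∑ j, x j * (∑ k, A j k * y k) * (∑ k, B j k * y k))
        + (∑ j, x j * ∑ k, A j k * y k) * (∑ k, y k * ∑ j, B j k * x j)) := by
  unfold Cfun
  rw [neg_inj]
  have key : ∀ j k, x j * y k * (A j k - ∑ k', A j k' * y k') * (B j k - ∑ j', B j' k * x j')
      = x j * y k * A j k * B j k
        - (A j k * x j) * (y k * ∑ j', B j' k * x j')
        - (x j * ∑ k', A j k' * y k') * (B j k * y k)
        + (x j * ∑ k', A j k' * y k') * (y k * ∑ j', B j' k * x j') := by
    intro j k; ring
  simp only [key, Finset.sum_add_distrib, Finset.sum_sub_distrib]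
  congr 1
  · congr 1
    · congr 1
      rw [Finset.sum_comm]
      refine Finset.sum_congr rfl fun k _ => ?_
      rw [← Finset.sum_mul]
      ring
    · refine Finset.sum_congr rfl fun j _ => ?_
      rw [← Finset.mul_sum]
  · rw [Finset.sum_mul]
    refine Finset.sum_congr rfl fun j _ => ?_
    rw [← Finset.mul_sum]

lemma Cswap {n m : ℕ} (M : Matrix (Fin n) (Fin m) ℝ) (x : Fin n → ℝ) (y : Fin m → ℝ) :
    ∑ j, x j * ∑ k, M j k * y k = ∑ k, y k * ∑ j, M j k * x j := by
  simp only [Finset.mul_sum]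
  rw [Finset.sum_comm]
  exact Finset.sum_congr rfl fun k _ => Finset.sum_congr rfl fun j _ => by ring

lemma Csymm {n m : ℕ} (A B : Matrix (Fin n) (Fin m) ℝ) (x : Fin n → ℝ) (y : Fin m → ℝ) :
    Cfun A B x y = Cfun B A x y := by
  rw [Cexp, Cexp, neg_inj]
  have h1 : (∑ j, ∑ k, x j * y k * A j k * B j k) = ∑ j, ∑ k, x j * y k * B j k * A j k :=
    Finset.sum_congr rfl fun j _ => Finset.sum_congr rfl fun k _ => by ring
  have h2 : (∑ k, y k * (∑ j, A j k * x j) * (∑ j, B j k * x j))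
      = ∑ k, y k * (∑ j, B j k * x j) * (∑ j, A j k * x j) :=
    Finset.sum_congr rfl fun k _ => by ring
  have h3 : (∑ j, x j * (∑ k, A j k * y k) * (∑ k, B j k * y k))
      = ∑ j, x j * (∑ k, B j k * y k) * (∑ k, A j k * y k) :=
    Finset.sum_congr rfl fun j _ => by ring
  have h4 : (∑ j, x j * ∑ k, A j k * y k) * (∑ k, y k * ∑ j, B j k * x j)
      = (∑ j, x j * ∑ k, B j k * y k) * (∑ k, y k * ∑ j, A j k * x j) := by
    rw [Cswap A, Cswap B, mul_comm]
  rw [h1, h2, h3, h4]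

theorem stmt0 {n m : ℕ} (A B : Matrix (Fin n) (Fin m) ℝ)
    (x : Fin n → ℝ) (y : Fin m → ℝ) (hx : IsProbVec x) (hy : IsProbVec y) :
    Cfun A B x y =
      Cfun ((1/2 : ℝ) • (A - B)) (-((1/2 : ℝ) • (A - B))) x y +
      Cfun ((1/2 : ℝ) • (A + B)) ((1/2 : ℝ) • (A + B)) x y := by
  have eZ : (1/2 : ℝ) • (A - B) = (1/2 : ℝ) • A + (-(1/2) : ℝ) • B := by
    rw [smul_sub, neg_smul, sub_eq_add_neg]
  have eN : -((1/2 : ℝ) • (A - B)) = (-(1/2) : ℝ) • A + (1/2 : ℝ) • B := by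
    rw [smul_sub, neg_sub, neg_smul, sub_eq_neg_add]
  have eC : (1/2 : ℝ) • (A + B) = (1/2 : ℝ) • A + (1/2 : ℝ) • B := smul_add _ _ _
  rw [eN, eZ, eC, Cbil, Cbil, Csymm B A]
  ring
end

section
/- For any real n×m matrix Z and probability vectors x ∈ Δⁿ, y ∈ Δᵐ, the quantity C_{(Z,-Z)}(x,y) := -Σ_{j,k} x_j y_k (Z_{jk} - (Zy)_j)(-Z_{jk} + (Zᵀx)_k) equals (1/4) Σ_{j,j',k,k'} x_j y_k x_{j'} y_{k'} (Z_{jk} + Z_{j'k'} - Z_{jk'} - Z_{j'k})². -/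
open Finset Matrix

section Aux

variable {n m : ℕ} (Z : Matrix (Fin n) (Fin m) ℝ) (x : Fin n → ℝ) (y : Fin m → ℝ)

/-- centered matrix -/
noncomputable def Wc (j : Fin n) (k : Fin m) : ℝ :=
  Z j k - (∑ k', Z j k' * y k') - (∑ j', Z j' k * x j') + ∑ j', ∑ k', x j' * y k' * Z j' k'

lemma hs1 : ∑ j, x j * (∑ k', Z j k' * y k') = ∑ j', ∑ k', x j' * y k' * Z j' k' :=
  Finset.sum_congr rfl fun j _ => by
    rw [Finset.mul_sum]; exact Finset.sum_congr rfl fun k _ => by ring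

lemma hs2 : ∑ k, y k * (∑ j', Z j' k * x j') = ∑ j', ∑ k', x j' * y k' * Z j' k' := by
  simp_rw [Finset.mul_sum]
  rw [Finset.sum_comm]
  exact Finset.sum_congr rfl fun j _ => Finset.sum_congr rfl fun k _ => by ring

lemma hW1 (hy1 : ∑ k, y k = 1) (j : Fin n) : ∑ k, y k * Wc Z x y j k = 0 := by
  have h : ∀ k, y k * Wc Z x y j k =
      y k * Z j k - y k * (∑ k', Z j k' * y k') - y k * (∑ j', Z j' k * x j')
        + y k * (∑ j', ∑ k', x j' * y k' * Z j' k') := fun k => by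
    simp only [Wc]; ring
  simp_rw [h]
  rw [Finset.sum_add_distrib, Finset.sum_sub_distrib, Finset.sum_sub_distrib,
    ← Finset.sum_mul, ← Finset.sum_mul, hy1, hs2 Z x y]
  have : ∑ k, y k * Z j k = ∑ k', Z j k' * y k' :=
    Finset.sum_congr rfl fun k _ => by ring
  rw [this]; ring

lemma hW2 (hx1 : ∑ j, x j = 1) (k : Fin m) : ∑ j, x j * Wc Z x y j k = 0 := by
  have h : ∀ j, x j * Wc Z x y j k =
      x j * Z j k - x j * (∑ k', Z j k' * y k') - x j * (∑ j', Z j' k * x j')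
        + x j * (∑ j', ∑ k', x j' * y k' * Z j' k') := fun j => by
    simp only [Wc]; ring
  simp_rw [h]
  rw [Finset.sum_add_distrib, Finset.sum_sub_distrib, Finset.sum_sub_distrib,
    ← Finset.sum_mul, ← Finset.sum_mul, hx1, hs1 Z x y]
  have : ∑ j, x j * Z j k = ∑ j', Z j' k * x j' :=
    Finset.sum_congr rfl fun j _ => by ring
  rw [this]; ring

lemma quad_sum {m : ℕ} (y : Fin m → ℝ) (hy1 : ∑ k, y k = 1) (g : Fin m → ℝ)
    (hg : ∑ k, y k * g k = 0) (C : ℝ) :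
    ∑ k, y k * (C + g k) ^ 2 = C ^ 2 + ∑ k, y k * g k ^ 2 := by
  have h : ∀ k, y k * (C + g k) ^ 2 =
      C ^ 2 * y k + (2 * C) * (y k * g k) + y k * g k ^ 2 := fun k => by ring
  simp_rw [h]
  rw [Finset.sum_add_distrib, Finset.sum_add_distrib, ← Finset.mul_sum, ← Finset.mul_sum,
    hy1, hg]
  ring

end Aux

section Main

variable {n m : ℕ} (Z : Matrix (Fin n) (Fin m) ℝ) (x : Fin n → ℝ) (y : Fin m → ℝ)

lemma lhs_eq (hx1 : ∑ j, x j = 1) (hy1 : ∑ k, y k = 1) :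
    Cfun Z (-Z) x y = ∑ j, ∑ k, x j * y k * Wc Z x y j k ^ 2 := by
  have hC : Cfun Z (-Z) x y =
      ∑ j, ∑ k, x j * y k * (Z j k - ∑ k', Z j k' * y k') * (Z j k - ∑ j', Z j' k * x j') := by
    simp only [Cfun, Matrix.neg_apply, neg_mul, Finset.sum_neg_distrib]
    rw [← Finset.sum_neg_distrib]
    refine Finset.sum_congr rfl fun j _ => ?_
    rw [← Finset.sum_neg_distrib]
    exact Finset.sum_congr rfl fun k _ => by ring
  rw [hC]
  set s : ℝ := ∑ j', ∑ k', x j' * y k' * Z j' k' with hs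
  have expand : ∀ (j : Fin n) (k : Fin m),
      x j * y k * (Z j k - ∑ k', Z j k' * y k') * (Z j k - ∑ j', Z j' k * x j') =
        x j * y k * Wc Z x y j k ^ 2
        + (x j * ((∑ k', Z j k' * y k') - s)) * (y k * Wc Z x y j k)
        + x j * y k * (((∑ j', Z j' k * x j') - s) * Wc Z x y j k)
        + (x j * ((∑ k', Z j k' * y k') - s)) * (y k * ((∑ j', Z j' k * x j') - s)) :=
    fun j k => by simp only [Wc, hs]; ring
  simp_rw [expand]
  simp_rw [Finset.sum_add_distrib]
  have hTa : ∑ j, ∑ k, (x j * ((∑ k', Z j k' * y k') - s)) * (y k * Wc Z x y j k) = 0 := by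
    refine Finset.sum_eq_zero fun j _ => ?_
    rw [← Finset.mul_sum, hW1 Z x y hy1 j, mul_zero]
  have hTb : ∑ j, ∑ k, x j * y k * (((∑ j', Z j' k * x j') - s) * Wc Z x y j k) = 0 := by
    rw [Finset.sum_comm]
    refine Finset.sum_eq_zero fun k _ => ?_
    have h : ∀ j, x j * y k * (((∑ j', Z j' k * x j') - s) * Wc Z x y j k) =
        (y k * ((∑ j', Z j' k * x j') - s)) * (x j * Wc Z x y j k) := fun j => by ring
    simp_rw [h]
    rw [← Finset.mul_sum, hW2 Z x y hx1 k, mul_zero]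
  have hzero : ∑ j, x j * ((∑ k', Z j k' * y k') - s) = 0 := by
    simp_rw [mul_sub]
    rw [Finset.sum_sub_distrib, ← Finset.sum_mul, hx1, hs1 Z x y, ← hs]
    ring
  have hTc : ∑ j, ∑ k, (x j * ((∑ k', Z j k' * y k') - s)) * (y k * ((∑ j', Z j' k * x j') - s)) = 0 := by
    simp_rw [← Finset.mul_sum]
    rw [← Finset.sum_mul, hzero, zero_mul]
  rw [hTa, hTb, hTc]
  ring

lemma rhs_eq (hx1 : ∑ j, x j = 1) (hy1 : ∑ k, y k = 1) :
    ∑ j, ∑ j', ∑ k, ∑ k',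
        x j * y k * x j' * y k' * (Z j k + Z j' k' - Z j k' - Z j' k) ^ 2 =
      4 * ∑ j, ∑ k, x j * y k * Wc Z x y j k ^ 2 := by
  set W : Fin n → Fin m → ℝ := Wc Z x y with hWdef
  have hD : ∀ (j j' : Fin n) (k k' : Fin m),
      Z j k + Z j' k' - Z j k' - Z j' k = W j k + W j' k' - W j k' - W j' k := by
    intro j j' k k'; simp only [hWdef, Wc]; ring
  -- F and G
  set F : Fin n → ℝ := fun j => ∑ k, y k * W j k ^ 2 with hF
  set G : Fin n → Fin n → ℝ := fun j j' => ∑ k, y k * (W j k * W j' k) with hG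
  have hGzero : ∀ j, ∑ j', x j' * G j j' = 0 := by
    intro j
    simp only [hG]
    simp_rw [Finset.mul_sum]
    rw [Finset.sum_comm]
    refine Finset.sum_eq_zero fun k _ => ?_
    have h : ∀ j', x j' * (y k * (W j k * W j' k)) =
        (y k * W j k) * (x j' * W j' k) := fun j' => by ring
    simp_rw [h]
    rw [← Finset.mul_sum, hWdef, hW2 Z x y hx1 k, mul_zero]
  have step1 : ∀ (j j' : Fin n) (k : Fin m),
      ∑ k', x j * y k * x j' * y k' * (Z j k + Z j' k' - Z j k' - Z j' k) ^ 2 =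
        x j * y k * x j' * ((W j k - W j' k) ^ 2 + ∑ k', y k' * (W j' k' - W j k') ^ 2) := by
    intro j j' k
    have hg : ∑ k', y k' * (W j' k' - W j k') = 0 := by
      simp_rw [mul_sub]
      rw [Finset.sum_sub_distrib, hWdef, hW1 Z x y hy1 j', hW1 Z x y hy1 j]
      ring
    have h : ∀ k', x j * y k * x j' * y k' * (Z j k + Z j' k' - Z j k' - Z j' k) ^ 2 =
        (x j * y k * x j') * (y k' * ((W j k - W j' k) + (W j' k' - W j k')) ^ 2) := by
      intro k'
      rw [hD j j' k k']; ring
    simp_rw [h]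
    rw [← Finset.mul_sum, quad_sum y hy1 _ hg]
  have step2 : ∀ (j j' : Fin n),
      ∑ k, ∑ k', x j * y k * x j' * y k' * (Z j k + Z j' k' - Z j k' - Z j' k) ^ 2 =
        x j * x j' * (2 * F j + 2 * F j' - 4 * G j j') := by
    intro j j'
    have hE : ∀ k : Fin m, (W j k - W j' k) ^ 2 + ∑ k', y k' * (W j' k' - W j k') ^ 2 =
        (W j k - W j' k) ^ 2 + (F j + F j' - 2 * G j j') := by
      intro k
      congr 1
      have h : ∀ k', y k' * (W j' k' - W j k') ^ 2 =
          y k' * W j k' ^ 2 + y k' * W j' k' ^ 2 - 2 * (y k' * (W j k' * W j' k')) :=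
        fun k' => by ring
      simp_rw [h]
      rw [Finset.sum_sub_distrib, Finset.sum_add_distrib, ← Finset.mul_sum]
    calc ∑ k, ∑ k', x j * y k * x j' * y k' * (Z j k + Z j' k' - Z j k' - Z j' k) ^ 2
        = ∑ k, x j * y k * x j' * ((W j k - W j' k) ^ 2 + (F j + F j' - 2 * G j j')) := by
          refine Finset.sum_congr rfl fun k _ => ?_
          rw [step1 j j' k, hE k]
      _ = ∑ k, ((x j * x j') * (y k * (W j k - W j' k) ^ 2)
            + (x j * x j' * (F j + F j' - 2 * G j j')) * y k) := by
          refine Finset.sum_congr rfl fun k _ => by ring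
      _ = x j * x j' * (2 * F j + 2 * F j' - 4 * G j j') := by
          rw [Finset.sum_add_distrib, ← Finset.mul_sum, ← Finset.mul_sum, hy1]
          have hsq : ∑ k, y k * (W j k - W j' k) ^ 2 = F j + F j' - 2 * G j j' := by
            have h : ∀ k, y k * (W j k - W j' k) ^ 2 =
                y k * W j k ^ 2 + y k * W j' k ^ 2 - 2 * (y k * (W j k * W j' k)) :=
              fun k => by ring
            simp_rw [h]
            rw [Finset.sum_sub_distrib, Finset.sum_add_distrib, ← Finset.mul_sum]
          rw [hsq]; ring
  have step3 : ∀ j : Fin n,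
      ∑ j', ∑ k, ∑ k', x j * y k * x j' * y k' * (Z j k + Z j' k' - Z j k' - Z j' k) ^ 2 =
        x j * (2 * F j + 2 * ∑ j'', x j'' * F j'') := by
    intro j
    have h : ∀ j', x j * x j' * (2 * F j + 2 * F j' - 4 * G j j') =
        (2 * x j * F j) * x j' + (2 * x j) * (x j' * F j') - (4 * x j) * (x j' * G j j') :=
      fun j' => by ring
    calc ∑ j', ∑ k, ∑ k', x j * y k * x j' * y k' * (Z j k + Z j' k' - Z j k' - Z j' k) ^ 2
        = ∑ j', x j * x j' * (2 * F j + 2 * F j' - 4 * G j j') :=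
          Finset.sum_congr rfl fun j' _ => step2 j j'
      _ = x j * (2 * F j + 2 * ∑ j'', x j'' * F j'') := by
          simp_rw [h]
          rw [Finset.sum_sub_distrib, Finset.sum_add_distrib, ← Finset.mul_sum,
            ← Finset.mul_sum, ← Finset.mul_sum, hx1, hGzero j]
          ring
  have hQ : ∑ j, x j * F j = ∑ j, ∑ k, x j * y k * W j k ^ 2 := by
    refine Finset.sum_congr rfl fun j _ => ?_
    simp only [hF]
    rw [Finset.mul_sum]
    exact Finset.sum_congr rfl fun k _ => by ring
  calc ∑ j, ∑ j', ∑ k, ∑ k', x j * y k * x j' * y k' * (Z j k + Z j' k' - Z j k' - Z j' k) ^ 2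
      = ∑ j, x j * (2 * F j + 2 * ∑ j'', x j'' * F j'') :=
        Finset.sum_congr rfl fun j _ => step3 j
    _ = 4 * ∑ j, ∑ k, x j * y k * W j k ^ 2 := by
        have h : ∀ j : Fin n, x j * (2 * F j + 2 * ∑ j'', x j'' * F j'') =
            2 * (x j * F j) + (2 * ∑ j'', x j'' * F j'') * x j := fun j => by ring
        simp_rw [h]
        rw [Finset.sum_add_distrib, ← Finset.mul_sum, ← Finset.mul_sum, hx1, hQ]
        ring

end Main

theorem stmt1 {n m : ℕ} (Z : Matrix (Fin n) (Fin m) ℝ)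
    (x : Fin n → ℝ) (y : Fin m → ℝ) (hx : IsProbVec x) (hy : IsProbVec y) :
    Cfun Z (-Z) x y =
      (1/4 : ℝ) * ∑ j, ∑ j', ∑ k, ∑ k',
        x j * y k * x j' * y k' * (Z j k + Z j' k' - Z j k' - Z j' k)^2 := by
  rw [rhs_eq Z x y hx.2 hy.2, lhs_eq Z x y hx.2 hy.2]
  ring
end

section
/- For any real n×m matrix Z and probability vectors x ∈ Δⁿ, y ∈ Δᵐ, C_{(Z,-Z)}(x,y) ≥ 0, i.e. the function C is nonnegative for zero-sum bimatrix games. -/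
open Finset Matrix

theorem stmt2 {n m : ℕ} (Z : Matrix (Fin n) (Fin m) ℝ)
    (x : Fin n → ℝ) (y : Fin m → ℝ) (hx : IsProbVec x) (hy : IsProbVec y) :
    0 ≤ Cfun Z (-Z) x y := by
  obtain ⟨hx0, hx1⟩ := hx
  obtain ⟨hy0, hy1⟩ := hy
  set a : Fin n → ℝ := fun j => ∑ k', Z j k' * y k' with ha
  set b : Fin m → ℝ := fun k => ∑ j', Z j' k * x j' with hb
  set E : ℝ := ∑ j, x j * a j with hE
  -- marginal identities
  have Ha : ∀ j, ∑ k, y k * Z j k = a j := by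
    intro j; rw [ha]; exact Finset.sum_congr rfl fun k _ => by ring
  have Hb : ∀ k, ∑ j, x j * Z j k = b k := by
    intro k; rw [hb]; exact Finset.sum_congr rfl fun j _ => by ring
  have HbE : ∑ k, y k * b k = E := by
    calc ∑ k, y k * b k = ∑ k, ∑ j, y k * (Z j k * x j) := by
          refine Finset.sum_congr rfl fun k _ => ?_
          rw [hb, Finset.mul_sum]
      _ = ∑ j, ∑ k, y k * (Z j k * x j) := Finset.sum_comm
      _ = ∑ j, x j * a j := by
          refine Finset.sum_congr rfl fun j _ => ?_
          rw [ha, Finset.mul_sum]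
          exact Finset.sum_congr rfl fun k _ => by ring
  -- separation lemmas
  have sep : ∀ (f : Fin n → ℝ) (g : Fin m → ℝ),
      ∑ j, ∑ k, (x j * f j) * (y k * g k) = (∑ j, x j * f j) * (∑ k, y k * g k) := by
    intro f g
    rw [Finset.sum_mul_sum]
  have sepZ1 : ∀ (f : Fin n → ℝ),
      ∑ j, ∑ k, (x j * f j) * (y k * Z j k) = ∑ j, x j * f j * a j := by
    intro f
    refine Finset.sum_congr rfl fun j _ => ?_
    rw [← Finset.mul_sum, Ha j]
  have sepZ2 : ∀ (g : Fin m → ℝ),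
      ∑ j, ∑ k, (y k * g k) * (x j * Z j k) = ∑ k, y k * g k * b k := by
    intro g
    rw [Finset.sum_comm]
    refine Finset.sum_congr rfl fun k _ => ?_
    rw [← Finset.mul_sum, Hb k]
  set Sa : ℝ := ∑ j, x j * a j * a j with hSa
  set Sb : ℝ := ∑ k, y k * b k * b k with hSb
  set S2 : ℝ := ∑ j, ∑ k, (x j * y k) * (Z j k * Z j k) with hS2
  -- constants
  have hconst : ∀ c : ℝ, ∑ j, x j * c = c := by
    intro c; rw [← Finset.sum_mul, hx1, one_mul]
  have hconstm : ∀ c : ℝ, ∑ k, y k * c = c := by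
    intro c; rw [← Finset.sum_mul, hy1, one_mul]
  -- LHS computation
  have hL : ∑ j, ∑ k, x j * y k * (Z j k - a j) * (Z j k - b k)
      = S2 - Sa - Sb + E * E := by
    have e1 : ∀ j k, x j * y k * (Z j k - a j) * (Z j k - b k)
        = (x j * y k) * (Z j k * Z j k) - (x j * a j) * (y k * Z j k)
          - (y k * b k) * (x j * Z j k) + (x j * a j) * (y k * b k) := by
      intro j k; ring
    calc ∑ j, ∑ k, x j * y k * (Z j k - a j) * (Z j k - b k)
        = ∑ j, ∑ k, ((x j * y k) * (Z j k * Z j k) - (x j * a j) * (y k * Z j k)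
          - (y k * b k) * (x j * Z j k) + (x j * a j) * (y k * b k)) := by
          exact Finset.sum_congr rfl fun j _ => Finset.sum_congr rfl fun k _ => e1 j k
      _ = S2 - Sa - Sb + E * E := by
          simp only [Finset.sum_add_distrib, Finset.sum_sub_distrib]
          rw [sepZ1 a, sepZ2 b, sep a b, HbE, ← hSa, ← hSb, ← hS2, ← hE]
  -- RHS computation
  have hR : ∑ j, ∑ k, x j * y k * (Z j k - a j - b k + E) ^ 2
      = S2 - Sa - Sb + E * E := by
    have e1 : ∀ j k, x j * y k * (Z j k - a j - b k + E) ^ 2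
        = (x j * y k) * (Z j k * Z j k)
          - 2 * ((x j * a j) * (y k * Z j k))
          - 2 * ((y k * b k) * (x j * Z j k))
          + 2 * E * ((x j * 1) * (y k * Z j k))
          + (x j * (a j * a j)) * (y k * 1)
          + (x j * 1) * (y k * (b k * b k))
          + E * E * ((x j * 1) * (y k * 1))
          + 2 * ((x j * a j) * (y k * b k))
          - 2 * E * ((x j * a j) * (y k * 1))
          - 2 * E * ((x j * 1) * (y k * b k)) := by
      intro j k; ring
    calc ∑ j, ∑ k, x j * y k * (Z j k - a j - b k + E) ^ 2
        = ∑ j, ∑ k, ((x j * y k) * (Z j k * Z j k)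
          - 2 * ((x j * a j) * (y k * Z j k))
          - 2 * ((y k * b k) * (x j * Z j k))
          + 2 * E * ((x j * 1) * (y k * Z j k))
          + (x j * (a j * a j)) * (y k * 1)
          + (x j * 1) * (y k * (b k * b k))
          + E * E * ((x j * 1) * (y k * 1))
          + 2 * ((x j * a j) * (y k * b k))
          - 2 * E * ((x j * a j) * (y k * 1))
          - 2 * E * ((x j * 1) * (y k * b k))) := by
          exact Finset.sum_congr rfl fun j _ => Finset.sum_congr rfl fun k _ => e1 j k
      _ = S2 - Sa - Sb + E * E := by
          simp only [Finset.sum_add_distrib, Finset.sum_sub_distrib, ← Finset.mul_sum]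
          rw [sepZ2 b]
          simp only [Ha, mul_one, hy1, HbE]
          have h2 : ∑ j, x j * (a j * a j) = Sa := by
            rw [hSa]; exact Finset.sum_congr rfl fun j _ => by ring
          have h3 : ∑ j, x j * ∑ i, y i * (b i * b i) = Sb := by
            rw [← Finset.sum_mul, hx1, one_mul, hSb]
            exact Finset.sum_congr rfl fun k _ => by ring
          have h4 : ∑ j, x j * a j * E = E * E := by
            rw [← Finset.sum_mul, ← hE]
          rw [h2, h3, h4, ← hE, ← hSa, ← hS2, hx1, hconst]
          ring
  -- conclude
  have hC : Cfun Z (-Z) x y = ∑ j, ∑ k, x j * y k * (Z j k - a j - b k + E) ^ 2 := by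
    have hneg : ∀ k, ∑ j', -Z j' k * x j' = -∑ j', Z j' k * x j' := by
      intro k
      rw [← Finset.sum_neg_distrib]
      exact Finset.sum_congr rfl fun j _ => by ring
    have : Cfun Z (-Z) x y = ∑ j, ∑ k, x j * y k * (Z j k - a j) * (Z j k - b k) := by
      rw [Cfun, ← Finset.sum_neg_distrib]
      refine Finset.sum_congr rfl fun j _ => ?_
      rw [← Finset.sum_neg_distrib]
      refine Finset.sum_congr rfl fun k _ => ?_
      simp only [Matrix.neg_apply]
      rw [hneg k]
      ring
    rw [this, hL, ← hR]
  rw [hC]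
  refine Finset.sum_nonneg fun j _ => Finset.sum_nonneg fun k _ => ?_
  have := hx0 j
  have := hy0 k
  positivity
end

section
/- For any real n×m matrix C and probability vectors x ∈ Δⁿ, y ∈ Δᵐ, C_{(C,C)}(x,y) ≤ 0, i.e. the function C is nonpositive for coordination bimatrix games. -/
open Finset Matrix

theorem stmt3 {n m : ℕ} (C : Matrix (Fin n) (Fin m) ℝ)
    (x : Fin n → ℝ) (y : Fin m → ℝ) (hx : IsProbVec x) (hy : IsProbVec y) :
    Cfun C C x y ≤ 0 := by
  obtain ⟨hx0, hx1⟩ := hx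
  obtain ⟨hy0, hy1⟩ := hy
  set a : Fin n → ℝ := fun j => ∑ k', C j k' * y k' with ha
  set b : Fin m → ℝ := fun k => ∑ j', C j' k * x j' with hb
  set μ : ℝ := ∑ j, x j * a j with hμ
  -- moments
  set M2 : ℝ := ∑ j, ∑ k, x j * y k * (C j k)^2 with hM2
  set Ma2 : ℝ := ∑ j, x j * (a j)^2 with hMa2
  set Mb2 : ℝ := ∑ k, y k * (b k)^2 with hMb2
  have hμb : ∑ k, y k * b k = μ := by
    rw [hμ]
    simp only [ha, hb, Finset.mul_sum]
    rw [Finset.sum_comm]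
    apply Finset.sum_congr rfl; intro j _
    apply Finset.sum_congr rfl; intro k _
    ring
  -- E[f·a] over weights
  have E_fa : ∑ j, ∑ k, x j * y k * C j k * a j = Ma2 := by
    apply Finset.sum_congr rfl; intro j _
    have : ∑ k, x j * y k * C j k * a j = x j * a j * ∑ k, C j k * y k := by
      rw [Finset.mul_sum]; apply Finset.sum_congr rfl; intro k _; ring
    rw [this]; simp only [ha]; ring
  have E_fb : ∑ j, ∑ k, x j * y k * C j k * b k = Mb2 := by
    rw [Finset.sum_comm]
    apply Finset.sum_congr rfl; intro k _
    have : ∑ j, x j * y k * C j k * b k = y k * b k * ∑ j, C j k * x j := by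
      rw [Finset.mul_sum]; apply Finset.sum_congr rfl; intro j _; ring
    rw [this]; simp only [hb]; ring
  have E_ab : ∑ j, ∑ k, x j * y k * a j * b k = μ * μ := by
    have : ∑ j, ∑ k, x j * y k * a j * b k = (∑ j, x j * a j) * (∑ k, y k * b k) := by
      rw [Finset.sum_mul]
      apply Finset.sum_congr rfl; intro j _
      rw [Finset.mul_sum]
      apply Finset.sum_congr rfl; intro k _; ring
    rw [this, hμb, ← hμ]
  have E_a2 : ∑ j, ∑ k, x j * y k * (a j)^2 = Ma2 := by
    apply Finset.sum_congr rfl; intro j _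
    have : ∑ k, x j * y k * (a j)^2 = x j * (a j)^2 * ∑ k, y k := by
      rw [Finset.mul_sum]; apply Finset.sum_congr rfl; intro k _; ring
    rw [this, hy1]; ring
  have E_b2 : ∑ j, ∑ k, x j * y k * (b k)^2 = Mb2 := by
    rw [Finset.sum_comm]
    apply Finset.sum_congr rfl; intro k _
    have : ∑ j, x j * y k * (b k)^2 = y k * (b k)^2 * ∑ j, x j := by
      rw [Finset.mul_sum]; apply Finset.sum_congr rfl; intro j _; ring
    rw [this, hx1]; ring
  have E_f : ∑ j, ∑ k, x j * y k * C j k = μ := by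
    rw [hμ]
    apply Finset.sum_congr rfl; intro j _
    simp only [ha, Finset.mul_sum]
    apply Finset.sum_congr rfl; intro k _; ring
  have E_a : ∑ j, ∑ k, x j * y k * a j = μ := by
    rw [hμ]
    apply Finset.sum_congr rfl; intro j _
    have : ∑ k, x j * y k * a j = x j * a j * ∑ k, y k := by
      rw [Finset.mul_sum]; apply Finset.sum_congr rfl; intro k _; ring
    rw [this, hy1]; ring
  have E_b : ∑ j, ∑ k, x j * y k * b k = μ := by
    rw [← hμb, Finset.sum_comm]
    apply Finset.sum_congr rfl; intro k _
    have : ∑ j, x j * y k * b k = y k * b k * ∑ j, x j := by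
      rw [Finset.mul_sum]; apply Finset.sum_congr rfl; intro j _; ring
    rw [this, hx1]; ring
  have E_1 : ∑ j, ∑ k, x j * y k * (1:ℝ) = 1 := by
    have : ∀ j, ∑ k, x j * y k * (1:ℝ) = x j * ∑ k, y k := by
      intro j; rw [Finset.mul_sum]; apply Finset.sum_congr rfl; intro k _; ring
    rw [Finset.sum_congr rfl (fun j _ => this j)]
    simp [hy1, hx1]
  -- LHS
  have LHS_eq : ∑ j, ∑ k, x j * y k * (C j k - a j) * (C j k - b k)
      = M2 - Ma2 - Mb2 + μ * μ := by
    have expand : ∀ j, ∑ k, x j * y k * (C j k - a j) * (C j k - b k)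
        = ∑ k, (x j * y k * (C j k)^2 - x j * y k * C j k * b k
            - x j * y k * C j k * a j + x j * y k * a j * b k) := by
      intro j; apply Finset.sum_congr rfl; intro k _; ring
    rw [Finset.sum_congr rfl (fun j _ => expand j)]
    simp only [Finset.sum_add_distrib, Finset.sum_sub_distrib]
    rw [E_fb, E_fa, E_ab, ← hM2]
    ring
  have RHS_eq : ∑ j, ∑ k, x j * y k * (C j k - a j - b k + μ)^2
      = M2 - Ma2 - Mb2 + μ * μ := by
    have expand : ∀ j, ∑ k, x j * y k * (C j k - a j - b k + μ)^2
        = ∑ k, (x j * y k * (C j k)^2 + x j * y k * (a j)^2 + x j * y k * (b k)^2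
            + (μ^2) * (x j * y k * 1)
            - 2 * (x j * y k * C j k * a j) - 2 * (x j * y k * C j k * b k)
            + (2*μ) * (x j * y k * C j k)
            + 2 * (x j * y k * a j * b k)
            - (2*μ) * (x j * y k * a j) - (2*μ) * (x j * y k * b k)) := by
      intro j; apply Finset.sum_congr rfl; intro k _; ring
    rw [Finset.sum_congr rfl (fun j _ => expand j)]
    simp only [Finset.sum_add_distrib, Finset.sum_sub_distrib, ← Finset.mul_sum]
    rw [E_fb, E_fa, E_ab, E_a2, E_b2, E_f, E_a, E_b, E_1, ← hM2]
    ring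
  have key : 0 ≤ ∑ j, ∑ k, x j * y k * (C j k - a j) * (C j k - b k) := by
    rw [LHS_eq, ← RHS_eq]
    apply Finset.sum_nonneg; intro j _
    apply Finset.sum_nonneg; intro k _
    have := mul_nonneg (hx0 j) (hy0 k)
    positivity
  show -∑ j, ∑ k, x j * y k * (C j k - a j) * (C j k - b k) ≤ 0
  linarith [key]
end

section
/- Let T¹ and T² be trivial n×m matrices, i.e. there exist vectors u, u' ∈ ℝⁿ and v, v' ∈ ℝᵐ with T¹_{jk} = u_j + v_k and T²_{jk} = u'_j + v'_k. Then for any real n×m matrices A, B and any probability vectors x ∈ Δⁿ, y ∈ Δᵐ, C_{(A,B)}(x,y) = C_{(A+T¹, B+T²)}(x,y). -/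
open Finset Matrix

theorem stmt4 {n m : ℕ} (A B T1 T2 : Matrix (Fin n) (Fin m) ℝ)
    (u u' : Fin n → ℝ) (v v' : Fin m → ℝ)
    (hT1 : ∀ j k, T1 j k = u j + v k) (hT2 : ∀ j k, T2 j k = u' j + v' k)
    (x : Fin n → ℝ) (y : Fin m → ℝ) (hx : IsProbVec x) (hy : IsProbVec y) :
    Cfun A B x y = Cfun (A + T1) (B + T2) x y := by
  obtain ⟨-, hx1⟩ := hx
  obtain ⟨-, hy1⟩ := hy
  -- residuals
  set α : Fin n → Fin m → ℝ := fun j k => A j k - ∑ k', A j k' * y k' with hα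
  set β : Fin n → Fin m → ℝ := fun j k => B j k - ∑ j', B j' k * x j' with hβ
  set p : Fin m → ℝ := fun k => v k - ∑ k', v k' * y k' with hp
  set q : Fin n → ℝ := fun j => u' j - ∑ j', u' j' * x j' with hq
  have hA : ∀ j k, (A + T1) j k - ∑ k', (A + T1) j k' * y k' = α j k + p k := by
    intro j k
    simp only [Matrix.add_apply, hT1, add_mul, Finset.sum_add_distrib, hα, hp]
    have h1 : ∑ k', u j * y k' = u j := by rw [← Finset.mul_sum, hy1, mul_one]
    rw [h1]; ring
  have hB : ∀ j k, (B + T2) j k - ∑ j', (B + T2) j' k * x j' = β j k + q j := by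
    intro j k
    simp only [Matrix.add_apply, hT2, add_mul, Finset.sum_add_distrib, hβ, hq]
    have h1 : ∑ j', v' k * x j' = v' k := by rw [← Finset.mul_sum, hx1, mul_one]
    rw [h1]; ring
  have hα0 : ∀ j, ∑ k, y k * α j k = 0 := by
    intro j
    simp only [hα, mul_sub, Finset.sum_sub_distrib, ← Finset.sum_mul, hy1, one_mul]
    rw [sub_eq_zero]
    exact Finset.sum_congr rfl fun k _ => mul_comm _ _
  have hβ0 : ∀ k, ∑ j, x j * β j k = 0 := by
    intro k
    simp only [hβ, mul_sub, Finset.sum_sub_distrib, ← Finset.sum_mul, hx1, one_mul]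
    rw [sub_eq_zero]
    exact Finset.sum_congr rfl fun j _ => mul_comm _ _
  have hp0 : ∑ k, y k * p k = 0 := by
    simp only [hp, mul_sub, Finset.sum_sub_distrib, ← Finset.sum_mul, hy1, one_mul]
    rw [sub_eq_zero]
    exact Finset.sum_congr rfl fun k _ => mul_comm _ _
  have hq0 : ∑ j, x j * q j = 0 := by
    simp only [hq, mul_sub, Finset.sum_sub_distrib, ← Finset.sum_mul, hx1, one_mul]
    rw [sub_eq_zero]
    exact Finset.sum_congr rfl fun j _ => mul_comm _ _
  unfold Cfun
  congr 1
  calc ∑ j, ∑ k, x j * y k * α j k * β j k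
      = ∑ j, ∑ k, (x j * y k * α j k * β j k
          + (x j * q j) * (y k * α j k)
          + (y k * p k) * (x j * β j k)
          + (x j * q j) * (y k * p k)) := by
        rw [eq_comm]
        simp only [Finset.sum_add_distrib]
        have e2 : ∀ j : Fin n, ∑ k, (x j * q j) * (y k * α j k) = 0 := by
          intro j; rw [← Finset.mul_sum, hα0, mul_zero]
        have e4 : ∀ j : Fin n, ∑ k, (x j * q j) * (y k * p k) = 0 := by
          intro j; rw [← Finset.mul_sum, hp0, mul_zero]
        have e3 : ∑ j, ∑ k, (y k * p k) * (x j * β j k) = 0 := by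
          rw [Finset.sum_comm]
          apply Finset.sum_eq_zero; intro k _
          rw [← Finset.mul_sum, hβ0, mul_zero]
        simp only [e2, e4, Finset.sum_const_zero, add_zero]
        rw [e3, add_zero]
    _ = ∑ j, ∑ k, x j * y k * (α j k + p k) * (β j k + q j) := by
        apply Finset.sum_congr rfl; intro j _
        apply Finset.sum_congr rfl; intro k _
        ring
    _ = ∑ j, ∑ k, x j * y k * ((A + T1) j k - ∑ k', (A + T1) j k' * y k')
          * ((B + T2) j k - ∑ j', (B + T2) j' k * x j') := by
        apply Finset.sum_congr rfl; intro j _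
        apply Finset.sum_congr rfl; intro k _
        rw [hA, hB]
end

section
/- For any bimatrix potential game (A, B) with potential matrix P, and any probability vectors x ∈ Δⁿ, y ∈ Δᵐ, C_{(A,B)}(x,y) = C_{(P,P)}(x,y) ≤ 0. -/
open Finset Matrix

private lemma cent {m : ℕ} {y : Fin m → ℝ} (hy : ∑ k, y k = 1) (h : Fin m → ℝ) :
    ∑ k, y k * (h k - ∑ k', h k' * y k') = 0 := by
  have h1 : ∑ k, y k * h k = ∑ k, h k * y k :=
    Finset.sum_congr rfl fun k _ => mul_comm _ _
  simp only [mul_sub, Finset.sum_sub_distrib, ← Finset.sum_mul, hy, one_mul, h1, sub_self]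

private lemma sumyv {n m : ℕ} (x : Fin n → ℝ) (y : Fin m → ℝ) (M : Matrix (Fin n) (Fin m) ℝ) :
    ∑ k, y k * ∑ j, M j k * x j = ∑ j, x j * ∑ k, M j k * y k := by
  calc ∑ k, y k * ∑ j, M j k * x j = ∑ k, ∑ j, y k * (M j k * x j) := by
        simp [Finset.mul_sum]
    _ = ∑ j, ∑ k, y k * (M j k * x j) := Finset.sum_comm
    _ = ∑ j, ∑ k, x j * (M j k * y k) :=
        Finset.sum_congr rfl fun j _ => Finset.sum_congr rfl fun k _ => by ring
    _ = ∑ j, x j * ∑ k, M j k * y k := by simp [Finset.mul_sum]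

private lemma split4 {n m : ℕ} (F : Fin n → Fin m → ℝ)
    (a : Fin n → ℝ) (b : Fin n → Fin m → ℝ) (c : Fin n → Fin m → ℝ) (d : Fin m → ℝ)
    (hb : ∀ j, ∑ k, b j k = 0) (hc : ∀ k, ∑ j, c j k = 0) (hd : ∑ k, d k = 0) :
    ∑ j, ∑ k, (F j k + a j * b j k + c j k * d k + a j * d k) = ∑ j, ∑ k, F j k := by
  simp only [Finset.sum_add_distrib]
  have T2 : ∑ j, ∑ k, a j * b j k = 0 := by
    simp only [← Finset.mul_sum, hb, mul_zero, Finset.sum_const_zero]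
  have T3 : ∑ j, ∑ k, c j k * d k = 0 := by
    rw [Finset.sum_comm]
    simp only [← Finset.sum_mul, hc, zero_mul, Finset.sum_const_zero]
  have T4 : ∑ j, ∑ k, a j * d k = 0 := by
    simp only [← Finset.mul_sum, hd, mul_zero, Finset.sum_const_zero]
  rw [T2, T3, T4]; ring

private lemma keysq {n m : ℕ} (x : Fin n → ℝ) (y : Fin m → ℝ) (M : Matrix (Fin n) (Fin m) ℝ)
    (u : Fin n → ℝ) (v : Fin m → ℝ) (s : ℝ)
    (hw1 : ∀ j, ∑ k, y k * (M j k - u j - v k + s) = 0)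
    (hw2 : ∀ k, ∑ j, x j * (M j k - u j - v k + s) = 0)
    (hd : ∑ k, y k * (v k - s) = 0) :
    ∑ j, ∑ k, x j * y k * (M j k - u j) * (M j k - v k)
      = ∑ j, ∑ k, x j * y k * (M j k - u j - v k + s) ^ 2 := by
  have expand : ∑ j, ∑ k, x j * y k * (M j k - u j) * (M j k - v k)
      = ∑ j, ∑ k, (x j * y k * (M j k - u j - v k + s) ^ 2
        + (x j * (u j - s)) * (y k * (M j k - u j - v k + s))
        + (x j * (M j k - u j - v k + s)) * (y k * (v k - s))
        + (x j * (u j - s)) * (y k * (v k - s))) :=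
    Finset.sum_congr rfl fun j _ => Finset.sum_congr rfl fun k _ => by ring
  rw [expand]
  exact split4 _ (fun j => x j * (u j - s)) (fun j k => y k * (M j k - u j - v k + s))
    (fun j k => x j * (M j k - u j - v k + s)) (fun k => y k * (v k - s))
    hw1 hw2 hd

theorem stmt6 {n m : ℕ} (A B P : Matrix (Fin n) (Fin m) ℝ)
    (hA : ∀ j j' k, A j k - A j' k = P j k - P j' k)
    (hB : ∀ j k k', B j k - B j k' = P j k - P j k')
    (x : Fin n → ℝ) (y : Fin m → ℝ) (hx : IsProbVec x) (hy : IsProbVec y) :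
    Cfun A B x y = Cfun P P x y ∧ Cfun P P x y ≤ 0 := by
  obtain ⟨hx0, hx1⟩ := hx
  obtain ⟨hy0, hy1⟩ := hy
  -- abbreviations
  have e1 : ∀ j, ∑ k, y k * P j k = ∑ k', P j k' * y k' := fun j =>
    Finset.sum_congr rfl fun k _ => mul_comm _ _
  have e2 : ∀ k, ∑ j, x j * P j k = ∑ j', P j' k * x j' := fun k =>
    Finset.sum_congr rfl fun j _ => mul_comm _ _
  have hsv : ∑ k, y k * ∑ j', P j' k * x j' = ∑ j, x j * ∑ k', P j k' * y k' := sumyv x y P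
  -- Part 2: Cfun P P ≤ 0
  have key : ∑ j, ∑ k, x j * y k * (P j k - ∑ k', P j k' * y k') * (P j k - ∑ j', P j' k * x j')
      = ∑ j, ∑ k, x j * y k *
          (P j k - (∑ k', P j k' * y k') - (∑ j', P j' k * x j')
            + ∑ j', x j' * ∑ k', P j' k' * y k') ^ 2 := by
    apply keysq
    · intro j
      have : ∑ k, y k * (P j k - (∑ k', P j k' * y k') - (∑ j', P j' k * x j')
            + ∑ j', x j' * ∑ k', P j' k' * y k')
          = (∑ k, y k * P j k) - (∑ k, y k) * (∑ k', P j k' * y k')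
            - (∑ k, y k * ∑ j', P j' k * x j')
            + (∑ k, y k) * (∑ j', x j' * ∑ k', P j' k' * y k') := by
        simp only [mul_sub, mul_add, Finset.sum_add_distrib, Finset.sum_sub_distrib,
          ← Finset.sum_mul]
      rw [this, e1 j, hy1, hsv]; ring
    · intro k
      have : ∑ j, x j * (P j k - (∑ k', P j k' * y k') - (∑ j', P j' k * x j')
            + ∑ j', x j' * ∑ k', P j' k' * y k')
          = (∑ j, x j * P j k) - (∑ j, x j * ∑ k', P j k' * y k')
            - (∑ j, x j) * (∑ j', P j' k * x j')
            + (∑ j, x j) * (∑ j', x j' * ∑ k', P j' k' * y k') := by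
        simp only [mul_sub, mul_add, Finset.sum_add_distrib, Finset.sum_sub_distrib,
          ← Finset.sum_mul]
      rw [this, e2 k, hx1]; ring
    · have : ∑ k, y k * ((∑ j', P j' k * x j') - ∑ j', x j' * ∑ k', P j' k' * y k')
          = (∑ k, y k * ∑ j', P j' k * x j')
            - (∑ k, y k) * (∑ j', x j' * ∑ k', P j' k' * y k') := by
        simp only [mul_sub, Finset.sum_sub_distrib, ← Finset.sum_mul]
      rw [this, hy1, hsv]; ring
  have part2 : Cfun P P x y ≤ 0 := by
    unfold Cfun
    rw [key]
    apply neg_nonpos_of_nonneg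
    refine Finset.sum_nonneg fun j _ => Finset.sum_nonneg fun k _ => ?_
    exact mul_nonneg (mul_nonneg (hx0 j) (hy0 k)) (sq_nonneg _)
  refine ⟨?_, part2⟩
  -- Part 1
  rcases Nat.eq_zero_or_pos n with hn | hn
  · subst hn; simp [Cfun]
  rcases Nat.eq_zero_or_pos m with hm | hm
  · subst hm; simp [Cfun]
  set j0 : Fin n := ⟨0, hn⟩
  set k0 : Fin m := ⟨0, hm⟩
  set f : Fin m → ℝ := fun k => A j0 k - P j0 k with hf
  set g : Fin n → ℝ := fun j => B j k0 - P j k0 with hg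
  have hAf : ∀ j k, A j k = P j k + f k := by
    intro j k; have := hA j j0 k; simp only [hf]; linarith
  have hBg : ∀ j k, B j k = P j k + g j := by
    intro j k; have := hB j k k0; simp only [hg]; linarith
  have hAsum : ∀ j, ∑ k', A j k' * y k' = (∑ k', P j k' * y k') + ∑ k', f k' * y k' := by
    intro j
    rw [← Finset.sum_add_distrib]
    exact Finset.sum_congr rfl fun k _ => by rw [hAf j k]; ring
  have hBsum : ∀ k, ∑ j', B j' k * x j' = (∑ j', P j' k * x j') + ∑ j', g j' * x j' := by
    intro k
    rw [← Finset.sum_add_distrib]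
    exact Finset.sum_congr rfl fun j _ => by rw [hBg j k]; ring
  unfold Cfun
  congr 1
  have expand : ∑ j, ∑ k, x j * y k * (A j k - ∑ k', A j k' * y k') * (B j k - ∑ j', B j' k * x j')
      = ∑ j, ∑ k, (x j * y k * (P j k - ∑ k', P j k' * y k') * (P j k - ∑ j', P j' k * x j')
        + (x j * (g j - ∑ j', g j' * x j')) * (y k * (P j k - ∑ k', P j k' * y k'))
        + (x j * (P j k - ∑ j', P j' k * x j')) * (y k * (f k - ∑ k', f k' * y k'))
        + (x j * (g j - ∑ j', g j' * x j')) * (y k * (f k - ∑ k', f k' * y k'))) := by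
    refine Finset.sum_congr rfl fun j _ => Finset.sum_congr rfl fun k _ => ?_
    rw [hAf j k, hBg j k, hAsum j, hBsum k]; ring
  rw [expand]
  apply split4
  · intro j; exact cent hy1 (fun k => P j k)
  · intro k; exact cent hx1 (fun j => P j k)
  · exact cent hy1 f
end

section
/- Let (A, B) be a bimatrix game with zero-sum part Z = (A-B)/2 and coordination part C = (A+B)/2. If Z dominates C (i.e., |Z_{jk}+Z_{j'k'}-Z_{jk'}-Z_{j'k}| ≥ |C_{jk}+C_{j'k'}-C_{jk'}-C_{j'k}| for all j,j',k,k'), then C_{(A,B)}(x,y) ≥ 0 for all probability vectors x ∈ Δⁿ, y ∈ Δᵐ. -/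
open Finset Matrix

def Dominates {n m : ℕ} (K L : Matrix (Fin n) (Fin m) ℝ) : Prop :=
  ∀ j j' k k', |L j k + L j' k' - L j k' - L j' k| ≤ |K j k + K j' k' - K j k' - K j' k|

theorem stmt8 {n m : ℕ} (A B : Matrix (Fin n) (Fin m) ℝ)
    (hdom : Dominates ((1/2 : ℝ) • (A - B)) ((1/2 : ℝ) • (A + B)))
    (x : Fin n → ℝ) (y : Fin m → ℝ) (hx : IsProbVec x) (hy : IsProbVec y) :
    0 ≤ Cfun A B x y := by
  obtain ⟨hx0, hx1⟩ := hx
  obtain ⟨hy0, hy1⟩ := hy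
  -- dominance gives D_A * D_B ≤ 0
  have key : ∀ (j j' : Fin n) (k k' : Fin m),
      (A j k + A j' k' - A j k' - A j' k) * (B j k + B j' k' - B j k' - B j' k) ≤ 0 := by
    intro j j' k k'
    have h := hdom j j' k k'
    simp only [Matrix.smul_apply, Matrix.add_apply, Matrix.sub_apply, smul_eq_mul] at h
    have h3 := mul_self_le_mul_self (abs_nonneg _) h
    rw [abs_mul_abs_self, abs_mul_abs_self] at h3
    nlinarith [h3]
  -- rewrite Cfun as a quadruple sum
  have hA : ∀ (j : Fin n) (k : Fin m),
      A j k - ∑ k', A j k' * y k' = ∑ k', y k' * (A j k - A j k') := by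
    intro j k
    simp only [mul_sub, Finset.sum_sub_distrib, ← Finset.sum_mul, hy1, one_mul]
    congr 1
    exact Finset.sum_congr rfl fun k' _ => mul_comm _ _
  have hB : ∀ (j : Fin n) (k : Fin m),
      B j k - ∑ j', B j' k * x j' = ∑ j', x j' * (B j k - B j' k) := by
    intro j k
    simp only [mul_sub, Finset.sum_sub_distrib, ← Finset.sum_mul, hx1, one_mul]
    congr 1
    exact Finset.sum_congr rfl fun j' _ => mul_comm _ _
  set F : Fin n × Fin m × Fin m × Fin n → ℝ := fun p =>
    x p.1 * y p.2.1 * y p.2.2.1 * x p.2.2.2 *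
      (-((A p.1 p.2.1 - A p.1 p.2.2.1) * (B p.1 p.2.1 - B p.2.2.2 p.2.1))) with hF
  have hmain : Cfun A B x y = ∑ p, F p := by
    unfold Cfun
    simp only [hF, Fintype.sum_prod_type]
    rw [← Finset.sum_neg_distrib]
    refine Finset.sum_congr rfl fun j _ => ?_
    rw [← Finset.sum_neg_distrib]
    refine Finset.sum_congr rfl fun k _ => ?_
    rw [hA j k, hB j k]
    simp only [mul_neg, Finset.sum_neg_distrib, neg_inj]
    simp only [Finset.sum_mul, Finset.mul_sum]
    rw [Finset.sum_comm]
    refine Finset.sum_congr rfl fun k' _ => ?_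
    refine Finset.sum_congr rfl fun j' _ => ?_
    ring
  -- symmetrization reindexings
  have s1 : ∑ p : Fin n × Fin m × Fin m × Fin n, F (p.1, p.2.2.1, p.2.1, p.2.2.2)
      = ∑ p, F p :=
    Equiv.sum_comp ⟨fun p => (p.1, p.2.2.1, p.2.1, p.2.2.2),
      fun p => (p.1, p.2.2.1, p.2.1, p.2.2.2), fun p => rfl, fun p => rfl⟩ F
  have s2 : ∑ p : Fin n × Fin m × Fin m × Fin n, F (p.2.2.2, p.2.1, p.2.2.1, p.1)
      = ∑ p, F p :=
    Equiv.sum_comp ⟨fun p => (p.2.2.2, p.2.1, p.2.2.1, p.1),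
      fun p => (p.2.2.2, p.2.1, p.2.2.1, p.1), fun p => rfl, fun p => rfl⟩ F
  have s3 : ∑ p : Fin n × Fin m × Fin m × Fin n, F (p.2.2.2, p.2.2.1, p.2.1, p.1)
      = ∑ p, F p :=
    Equiv.sum_comp ⟨fun p => (p.2.2.2, p.2.2.1, p.2.1, p.1),
      fun p => (p.2.2.2, p.2.2.1, p.2.1, p.1), fun p => rfl, fun p => rfl⟩ F
  have h4 : 4 * (∑ p, F p)
      = ∑ p : Fin n × Fin m × Fin m × Fin n,
          (F p + F (p.1, p.2.2.1, p.2.1, p.2.2.2) + F (p.2.2.2, p.2.1, p.2.2.1, p.1)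
            + F (p.2.2.2, p.2.2.1, p.2.1, p.1)) := by
    rw [Finset.sum_add_distrib, Finset.sum_add_distrib, Finset.sum_add_distrib, s1, s2, s3]
    ring
  have h6 : 0 ≤ ∑ p : Fin n × Fin m × Fin m × Fin n,
      (F p + F (p.1, p.2.2.1, p.2.1, p.2.2.2) + F (p.2.2.2, p.2.1, p.2.2.1, p.1)
        + F (p.2.2.2, p.2.2.1, p.2.1, p.1)) := by
    refine Finset.sum_nonneg fun p _ => ?_
    have h5 : F p + F (p.1, p.2.2.1, p.2.1, p.2.2.2) + F (p.2.2.2, p.2.1, p.2.2.1, p.1)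
        + F (p.2.2.2, p.2.2.1, p.2.1, p.1)
        = x p.1 * y p.2.1 * y p.2.2.1 * x p.2.2.2 *
          (-((A p.1 p.2.1 + A p.2.2.2 p.2.2.1 - A p.1 p.2.2.1 - A p.2.2.2 p.2.1) *
             (B p.1 p.2.1 + B p.2.2.2 p.2.2.1 - B p.1 p.2.2.1 - B p.2.2.2 p.2.1))) := by
      simp only [hF]
      ring
    rw [h5]
    have hw : 0 ≤ x p.1 * y p.2.1 * y p.2.2.1 * x p.2.2.2 :=
      mul_nonneg (mul_nonneg (mul_nonneg (hx0 p.1) (hy0 p.2.1)) (hy0 p.2.2.1)) (hx0 p.2.2.2)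
    exact mul_nonneg hw (neg_nonneg.mpr (key p.1 p.2.2.2 p.2.1 p.2.2.1))
  rw [hmain]
  linarith [h4, h6]
end

section
/- Let (A, B) be a bimatrix game with zero-sum part Z = (A-B)/2 and coordination part C = (A+B)/2. If Z does not dominate C, then there exist probability vectors x ∈ Δⁿ, y ∈ Δᵐ (with strictly positive entries) such that C_{(A,B)}(x,y) < 0. -/
open Finset Matrix

/-!
Not dominating means there are rows `j, j'` and columns `k, k'` whose 2×2 interactions
`α` of `A` and `β` of `B` satisfy `|α - β| < |α + β|`, i.e. `α β > 0`. On the profile mixing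
`j, j'` and `k, k'` equally, `Cfun A B = -α β / 16 < 0`; by continuity this persists after
mixing in a little of the uniform profile, which has full support.
-/

open Filter Topology

lemma abs_sub_lt_abs_add_iff_mul_pos {R : Type*} [CommRing R] [LinearOrder R]
    [IsStrictOrderedRing R] (a b : R) : |a - b| < |a + b| ↔ 0 < a * b := by
  rw [← sq_lt_sq]
  constructor <;> intro h <;> nlinarith

section Interaction

variable {n m : ℕ}

def interaction (K : Matrix (Fin n) (Fin m) ℝ) (j j' : Fin n) (k k' : Fin m) : ℝ :=
  K j k + K j' k' - K j k' - K j' k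

lemma dominates_iff (K L : Matrix (Fin n) (Fin m) ℝ) :
    Dominates K L ↔ ∀ j j' k k', |interaction L j j' k k'| ≤ |interaction K j j' k k'| :=
  Iff.rfl

lemma exists_interaction_mul_pos_of_not_dominates {A B : Matrix (Fin n) (Fin m) ℝ}
    (h : ¬ Dominates ((1/2 : ℝ) • (A - B)) ((1/2 : ℝ) • (A + B))) :
    ∃ j j' k k', 0 < interaction A j j' k k' * interaction B j j' k k' := by
  simp only [dominates_iff, not_forall, not_le] at h
  obtain ⟨j, j', k, k', h⟩ := h
  refine ⟨j, j', k, k', (abs_sub_lt_abs_add_iff_mul_pos _ _).1 ?_⟩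
  have hZ : interaction ((1/2 : ℝ) • (A - B)) j j' k k' =
      (1/2 : ℝ) * (interaction A j j' k k' - interaction B j j' k k') := by
    simp only [interaction, Matrix.smul_apply, Matrix.sub_apply, smul_eq_mul]; ring
  have hC : interaction ((1/2 : ℝ) • (A + B)) j j' k k' =
      (1/2 : ℝ) * (interaction A j j' k k' + interaction B j j' k k') := by
    simp only [interaction, Matrix.smul_apply, Matrix.add_apply, smul_eq_mul]; ring
  rw [hZ, hC, abs_mul, abs_mul] at h
  exact lt_of_mul_lt_mul_left h (abs_nonneg _)

end Interaction

section PairWeight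

variable {ι : Type*} [Fintype ι] [DecidableEq ι]

noncomputable def pairWeight (i₁ i₂ : ι) : ι → ℝ :=
  fun i => (if i = i₁ then 1/2 else 0) + (if i = i₂ then 1/2 else 0)

lemma sum_pairWeight_mul (i₁ i₂ : ι) (g : ι → ℝ) :
    ∑ i, pairWeight i₁ i₂ i * g i = (g i₁ + g i₂) / 2 := by
  simp only [pairWeight, add_mul, ite_mul, zero_mul, sum_add_distrib, sum_ite_eq', mem_univ,
    if_true]
  ring

lemma sum_mul_pairWeight (i₁ i₂ : ι) (g : ι → ℝ) :
    ∑ i, g i * pairWeight i₁ i₂ i = (g i₁ + g i₂) / 2 := by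
  simp only [mul_comm (g _), sum_pairWeight_mul]

lemma isProbVec_pairWeight {N : ℕ} (i₁ i₂ : Fin N) : IsProbVec (pairWeight i₁ i₂) := by
  refine ⟨fun i => by unfold pairWeight; positivity, ?_⟩
  simpa using sum_pairWeight_mul i₁ i₂ (fun _ => 1)

end PairWeight

lemma Cfun_pairWeight {n m : ℕ} (A B : Matrix (Fin n) (Fin m) ℝ) (j j' : Fin n) (k k' : Fin m) :
    Cfun A B (pairWeight j j') (pairWeight k k') =
      -(interaction A j j' k k' * interaction B j j' k k') / 16 := by
  simp only [Cfun, sum_mul_pairWeight, mul_assoc, ← mul_sum, sum_pairWeight_mul, interaction]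
  ring

lemma continuous_Cfun {n m : ℕ} (A B : Matrix (Fin n) (Fin m) ℝ) :
    Continuous fun p : (Fin n → ℝ) × (Fin m → ℝ) => Cfun A B p.1 p.2 := by
  unfold Cfun
  fun_prop

section MixUniform

variable {N : ℕ}

noncomputable def mixUniform (x : Fin N → ℝ) (t : ℝ) : Fin N → ℝ :=
  fun i => (1 - t) * x i + t / N

lemma IsProbVec.ne_zero {x : Fin N → ℝ} (hx : IsProbVec x) : N ≠ 0 := by
  rintro rfl
  simpa using hx.2

lemma IsProbVec.mixUniform_pos {x : Fin N → ℝ} (hx : IsProbVec x) {t : ℝ} (ht₀ : 0 < t)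
    (ht₁ : t ≤ 1) : IsProbVec (mixUniform x t) ∧ ∀ i, 0 < mixUniform x t i := by
  have hN : (0 : ℝ) < N := by exact_mod_cast Nat.pos_of_ne_zero hx.ne_zero
  have hpos : ∀ i, 0 < mixUniform x t i := fun i =>
    add_pos_of_nonneg_of_pos (mul_nonneg (by linarith) (hx.1 i)) (div_pos ht₀ hN)
  refine ⟨⟨fun i => (hpos i).le, ?_⟩, hpos⟩
  simp only [mixUniform, sum_add_distrib, ← mul_sum, hx.2, sum_const, card_univ, Fintype.card_fin,
    nsmul_eq_mul]
  field_simp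
  ring

lemma continuous_mixUniform (x : Fin N → ℝ) : Continuous (mixUniform x) := by
  unfold mixUniform
  fun_prop

lemma mixUniform_zero (x : Fin N → ℝ) : mixUniform x 0 = x := by
  ext i
  simp [mixUniform]

end MixUniform

lemma exists_pos_probVec_mem_of_isOpen {n m : ℕ} {U : Set ((Fin n → ℝ) × (Fin m → ℝ))}
    (hU : IsOpen U) {x : Fin n → ℝ} {y : Fin m → ℝ} (hx : IsProbVec x) (hy : IsProbVec y)
    (hxy : (x, y) ∈ U) :
    ∃ (x' : Fin n → ℝ) (y' : Fin m → ℝ),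
      IsProbVec x' ∧ IsProbVec y' ∧ (∀ j, 0 < x' j) ∧ (∀ k, 0 < y' k) ∧ (x', y') ∈ U := by
  have hmix : Tendsto (fun t => (mixUniform x t, mixUniform y t)) (𝓝[>] 0) (𝓝 (x, y)) := by
    have h := ((continuous_mixUniform x).prodMk (continuous_mixUniform y)).tendsto 0
    rw [mixUniform_zero, mixUniform_zero] at h
    exact h.mono_left nhdsWithin_le_nhds
  have hsmall : ∀ᶠ t in 𝓝[>] (0 : ℝ), t ≤ 1 :=
    nhdsWithin_le_nhds (eventually_le_nhds zero_lt_one)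
  obtain ⟨t, ⟨ht₀, ht₁⟩, htU⟩ :=
    ((eventually_mem_nhdsWithin.and hsmall).and (hmix.eventually (hU.mem_nhds hxy))).exists
  obtain ⟨hx', hx'pos⟩ := hx.mixUniform_pos ht₀ ht₁
  obtain ⟨hy', hy'pos⟩ := hy.mixUniform_pos ht₀ ht₁
  exact ⟨_, _, hx', hy', hx'pos, hy'pos, htU⟩

theorem stmt9_general {n m : ℕ} (A B : Matrix (Fin n) (Fin m) ℝ)
    (hdom : ¬ Dominates ((1/2 : ℝ) • (A - B)) ((1/2 : ℝ) • (A + B))) :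
    ∃ (x : Fin n → ℝ) (y : Fin m → ℝ),
      IsProbVec x ∧ IsProbVec y ∧ (∀ j, 0 < x j) ∧ (∀ k, 0 < y k) ∧
      Cfun A B x y < 0 := by
  obtain ⟨j, j', k, k', hαβ⟩ := exists_interaction_mul_pos_of_not_dominates hdom
  have hneg : Cfun A B (pairWeight j j') (pairWeight k k') < 0 := by
    rw [Cfun_pairWeight]
    linarith
  exact exists_pos_probVec_mem_of_isOpen (isOpen_lt (continuous_Cfun A B) continuous_const)
    (isProbVec_pairWeight j j') (isProbVec_pairWeight k k') hneg

theorem stmt9 {n m : ℕ} (hn : 1 ≤ n) (hm : 1 ≤ m) (A B : Matrix (Fin n) (Fin m) ℝ)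
    (hdom : ¬ Dominates ((1/2 : ℝ) • (A - B)) ((1/2 : ℝ) • (A + B))) :
    ∃ (x : Fin n → ℝ) (y : Fin m → ℝ),
      IsProbVec x ∧ IsProbVec y ∧ (∀ j, 0 < x j) ∧ (∀ k, 0 < y k) ∧
      Cfun A B x y < 0 :=
  stmt9_general A B hdom
end

section
/- Let (A, B) be a bimatrix game with zero-sum part Z = (A-B)/2 and coordination part C = (A+B)/2, and suppose Z θ-dominates C for some θ > 0: Z dominates C and there exist indices j, j', k, k' with |Z_{jk}+Z_{j'k'}-Z_{jk'}-Z_{j'k}| ≥ |C_{jk}+C_{j'k'}-C_{jk'}-C_{j'k}| + θ. Then for all probability vectors x ∈ Δⁿ, y ∈ Δᵐ whose every entry is at least δ > 0, C_{(A,B)}(x,y) ≥ θ²δ⁴. -/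
open Finset Matrix

lemma collapse {ι : Type*} [Fintype ι] (w f : ι → ℝ) (hw : ∑ i, w i = 1)
    (hf : ∑ i, f i * w i = 0) (c A : ℝ) :
    ∑ i, c * ((A - f i) * w i) = c * A := by
  have h : ∀ i, c * ((A - f i) * w i) = c * (w i * A) - c * (f i * w i) := fun i => by ring
  rw [Finset.sum_congr rfl fun i _ => h i, Finset.sum_sub_distrib, ← Finset.mul_sum,
    ← Finset.mul_sum, hf, mul_zero, sub_zero, ← Finset.sum_mul, hw, one_mul]

lemma main_ident {n m : ℕ} (x : Fin n → ℝ) (y : Fin m → ℝ)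
    (hx1 : ∑ j, x j = 1) (hy1 : ∑ k, y k = 1)
    (a b : Fin n → Fin m → ℝ)
    (ha : ∀ j, ∑ k, a j k * y k = 0) (hb : ∀ k, ∑ j, b j k * x j = 0) :
    ∑ j, ∑ j', ∑ k, ∑ k', (x j * x j' * (y k * y k')) *
      ((a j k + a j' k' - a j k' - a j' k) * (b j k + b j' k' - b j k' - b j' k))
    = 4 * ∑ j, ∑ k, x j * y k * (a j k * b j k) := by
  have t1 : ∑ j, ∑ j', ∑ k, ∑ k', (x j * x j' * (y k * y k')) *
      ((a j k - a j k') * (b j k - b j' k)) = ∑ j, ∑ k, x j * y k * (a j k * b j k) := by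
    calc ∑ j, ∑ j', ∑ k, ∑ k', (x j * x j' * (y k * y k')) *
          ((a j k - a j k') * (b j k - b j' k))
        = ∑ j, ∑ j', ∑ k, (x j * x j' * y k * (b j k - b j' k)) * a j k := by
          refine Finset.sum_congr rfl fun j _ => Finset.sum_congr rfl fun j' _ =>
            Finset.sum_congr rfl fun k _ => ?_
          rw [← collapse y (fun k' => a j k') hy1 (ha j)
            (x j * x j' * y k * (b j k - b j' k)) (a j k)]
          exact Finset.sum_congr rfl fun k' _ => by ring
      _ = ∑ j, ∑ k, ∑ j', (x j * x j' * y k * (b j k - b j' k)) * a j k :=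
          Finset.sum_congr rfl fun j _ => Finset.sum_comm
      _ = ∑ j, ∑ k, (x j * y k * a j k) * b j k := by
          refine Finset.sum_congr rfl fun j _ => Finset.sum_congr rfl fun k _ => ?_
          rw [← collapse x (fun j' => b j' k) hx1 (hb k) (x j * y k * a j k) (b j k)]
          exact Finset.sum_congr rfl fun j' _ => by ring
      _ = ∑ j, ∑ k, x j * y k * (a j k * b j k) :=
          Finset.sum_congr rfl fun j _ => Finset.sum_congr rfl fun k _ => by ring
  have t2 : ∑ j, ∑ j', ∑ k, ∑ k', (x j * x j' * (y k * y k')) *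
      ((a j k - a j k') * (b j' k' - b j k')) = ∑ j, ∑ k, x j * y k * (a j k * b j k) := by
    calc ∑ j, ∑ j', ∑ k, ∑ k', (x j * x j' * (y k * y k')) *
          ((a j k - a j k') * (b j' k' - b j k'))
        = ∑ j, ∑ j', ∑ k', ∑ k, (x j * x j' * (y k * y k')) *
          ((a j k - a j k') * (b j' k' - b j k')) :=
          Finset.sum_congr rfl fun j _ => Finset.sum_congr rfl fun j' _ => Finset.sum_comm
      _ = ∑ j, ∑ j', ∑ k', (-(x j * x j' * y k' * (b j' k' - b j k'))) * a j k' := by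
          refine Finset.sum_congr rfl fun j _ => Finset.sum_congr rfl fun j' _ =>
            Finset.sum_congr rfl fun k' _ => ?_
          rw [← collapse y (fun k => a j k) hy1 (ha j)
            (-(x j * x j' * y k' * (b j' k' - b j k'))) (a j k')]
          exact Finset.sum_congr rfl fun k _ => by ring
      _ = ∑ j, ∑ k', ∑ j', (-(x j * x j' * y k' * (b j' k' - b j k'))) * a j k' :=
          Finset.sum_congr rfl fun j _ => Finset.sum_comm
      _ = ∑ j, ∑ k', (x j * y k' * a j k') * b j k' := by
          refine Finset.sum_congr rfl fun j _ => Finset.sum_congr rfl fun k' _ => ?_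
          rw [← collapse x (fun j' => b j' k') hx1 (hb k') (x j * y k' * a j k') (b j k')]
          exact Finset.sum_congr rfl fun j' _ => by ring
      _ = ∑ j, ∑ k, x j * y k * (a j k * b j k) :=
          Finset.sum_congr rfl fun j _ => Finset.sum_congr rfl fun k _ => by ring
  have t3 : ∑ j, ∑ j', ∑ k, ∑ k', (x j * x j' * (y k * y k')) *
      ((a j' k' - a j' k) * (b j k - b j' k)) = ∑ j, ∑ k, x j * y k * (a j k * b j k) := by
    calc ∑ j, ∑ j', ∑ k, ∑ k', (x j * x j' * (y k * y k')) *
          ((a j' k' - a j' k) * (b j k - b j' k))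
        = ∑ j, ∑ j', ∑ k, (-(x j * x j' * y k * (b j k - b j' k))) * a j' k := by
          refine Finset.sum_congr rfl fun j _ => Finset.sum_congr rfl fun j' _ =>
            Finset.sum_congr rfl fun k _ => ?_
          rw [← collapse y (fun k' => a j' k') hy1 (ha j')
            (-(x j * x j' * y k * (b j k - b j' k))) (a j' k)]
          exact Finset.sum_congr rfl fun k' _ => by ring
      _ = ∑ j', ∑ j, ∑ k, (-(x j * x j' * y k * (b j k - b j' k))) * a j' k :=
          Finset.sum_comm
      _ = ∑ j', ∑ k, ∑ j, (-(x j * x j' * y k * (b j k - b j' k))) * a j' k :=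
          Finset.sum_congr rfl fun j' _ => Finset.sum_comm
      _ = ∑ j', ∑ k, (x j' * y k * a j' k) * b j' k := by
          refine Finset.sum_congr rfl fun j' _ => Finset.sum_congr rfl fun k _ => ?_
          rw [← collapse x (fun j => b j k) hx1 (hb k) (x j' * y k * a j' k) (b j' k)]
          exact Finset.sum_congr rfl fun j _ => by ring
      _ = ∑ j, ∑ k, x j * y k * (a j k * b j k) :=
          Finset.sum_congr rfl fun j _ => Finset.sum_congr rfl fun k _ => by ring
  have t4 : ∑ j, ∑ j', ∑ k, ∑ k', (x j * x j' * (y k * y k')) *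
      ((a j' k' - a j' k) * (b j' k' - b j k')) = ∑ j, ∑ k, x j * y k * (a j k * b j k) := by
    calc ∑ j, ∑ j', ∑ k, ∑ k', (x j * x j' * (y k * y k')) *
          ((a j' k' - a j' k) * (b j' k' - b j k'))
        = ∑ j, ∑ j', ∑ k', ∑ k, (x j * x j' * (y k * y k')) *
          ((a j' k' - a j' k) * (b j' k' - b j k')) :=
          Finset.sum_congr rfl fun j _ => Finset.sum_congr rfl fun j' _ => Finset.sum_comm
      _ = ∑ j, ∑ j', ∑ k', (x j * x j' * y k' * (b j' k' - b j k')) * a j' k' := by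
          refine Finset.sum_congr rfl fun j _ => Finset.sum_congr rfl fun j' _ =>
            Finset.sum_congr rfl fun k' _ => ?_
          rw [← collapse y (fun k => a j' k) hy1 (ha j')
            (x j * x j' * y k' * (b j' k' - b j k')) (a j' k')]
          exact Finset.sum_congr rfl fun k _ => by ring
      _ = ∑ j', ∑ j, ∑ k', (x j * x j' * y k' * (b j' k' - b j k')) * a j' k' :=
          Finset.sum_comm
      _ = ∑ j', ∑ k', ∑ j, (x j * x j' * y k' * (b j' k' - b j k')) * a j' k' :=
          Finset.sum_congr rfl fun j' _ => Finset.sum_comm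
      _ = ∑ j', ∑ k', (x j' * y k' * a j' k') * b j' k' := by
          refine Finset.sum_congr rfl fun j' _ => Finset.sum_congr rfl fun k' _ => ?_
          rw [← collapse x (fun j => b j k') hx1 (hb k')
            (x j' * y k' * a j' k') (b j' k')]
          exact Finset.sum_congr rfl fun j _ => by ring
      _ = ∑ j, ∑ k, x j * y k * (a j k * b j k) :=
          Finset.sum_congr rfl fun j _ => Finset.sum_congr rfl fun k _ => by ring
  calc ∑ j, ∑ j', ∑ k, ∑ k', (x j * x j' * (y k * y k')) *
        ((a j k + a j' k' - a j k' - a j' k) * (b j k + b j' k' - b j k' - b j' k))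
      = ∑ j, ∑ j', ∑ k, ∑ k',
          ((x j * x j' * (y k * y k')) * ((a j k - a j k') * (b j k - b j' k))
        + (x j * x j' * (y k * y k')) * ((a j k - a j k') * (b j' k' - b j k'))
        + (x j * x j' * (y k * y k')) * ((a j' k' - a j' k) * (b j k - b j' k))
        + (x j * x j' * (y k * y k')) * ((a j' k' - a j' k) * (b j' k' - b j k'))) := by
        refine Finset.sum_congr rfl fun j _ => Finset.sum_congr rfl fun j' _ =>
          Finset.sum_congr rfl fun k _ => Finset.sum_congr rfl fun k' _ => by ring
    _ = 4 * ∑ j, ∑ k, x j * y k * (a j k * b j k) := by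
        simp only [Finset.sum_add_distrib, t1, t2, t3, t4]; ring

lemma pair_le_sum {N : ℕ} (f : Fin N → ℝ) (h : ∀ i, 0 ≤ f i) (i0 i1 : Fin N)
    (hne : i0 ≠ i1) : f i0 + f i1 ≤ ∑ i, f i := by
  rw [← Finset.sum_pair hne]
  exact Finset.sum_le_sum_of_subset_of_nonneg (Finset.subset_univ _) (fun i _ _ => h i)

lemma four_tuple_bound {n m : ℕ} (F : Fin n → Fin n → Fin m → Fin m → ℝ)
    (hF : ∀ j j' k k', 0 ≤ F j j' k k')
    (j0 j0' : Fin n) (k0 k0' : Fin m) (hj : j0 ≠ j0') (hk : k0 ≠ k0') (c : ℝ)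
    (h1 : c ≤ F j0 j0' k0 k0') (h2 : c ≤ F j0 j0' k0' k0)
    (h3 : c ≤ F j0' j0 k0 k0') (h4 : c ≤ F j0' j0 k0' k0) :
    4 * c ≤ ∑ j, ∑ j', ∑ k, ∑ k', F j j' k k' := by
  have hkk : ∀ j j', c ≤ F j j' k0 k0' → c ≤ F j j' k0' k0 →
      2 * c ≤ ∑ k, ∑ k', F j j' k k' := by
    intro j j' hA hB
    have e1 : F j j' k0 k0' ≤ ∑ k', F j j' k0 k' :=
      Finset.single_le_sum (f := fun k' => F j j' k0 k') (fun i _ => hF j j' k0 i) (Finset.mem_univ k0')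
    have e2 : F j j' k0' k0 ≤ ∑ k', F j j' k0' k' :=
      Finset.single_le_sum (f := fun k' => F j j' k0' k') (fun i _ => hF j j' k0' i) (Finset.mem_univ k0)
    have e3 : (∑ k', F j j' k0 k') + (∑ k', F j j' k0' k') ≤ ∑ k, ∑ k', F j j' k k' :=
      pair_le_sum (fun k => ∑ k', F j j' k k') (fun k => Finset.sum_nonneg fun k' _ => hF j j' k k') _ _ hk
    linarith
  have f1 := hkk _ _ h1 h2
  have f2 := hkk _ _ h3 h4
  have e1 : (∑ k, ∑ k', F j0 j0' k k') ≤ ∑ j', ∑ k, ∑ k', F j0 j' k k' :=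
    Finset.single_le_sum (f := fun j' => ∑ k, ∑ k', F j0 j' k k')
      (fun j' _ => Finset.sum_nonneg fun k _ => Finset.sum_nonneg fun k' _ => hF _ _ _ _)
      (Finset.mem_univ j0')
  have e2 : (∑ k, ∑ k', F j0' j0 k k') ≤ ∑ j', ∑ k, ∑ k', F j0' j' k k' :=
    Finset.single_le_sum (f := fun j' => ∑ k, ∑ k', F j0' j' k k')
      (fun j' _ => Finset.sum_nonneg fun k _ => Finset.sum_nonneg fun k' _ => hF _ _ _ _)
      (Finset.mem_univ j0)
  have e3 : (∑ j', ∑ k, ∑ k', F j0 j' k k') + (∑ j', ∑ k, ∑ k', F j0' j' k k')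
      ≤ ∑ j, ∑ j', ∑ k, ∑ k', F j j' k k' :=
    pair_le_sum (fun j => ∑ j', ∑ k, ∑ k', F j j' k k') (fun j => Finset.sum_nonneg fun j' _ => Finset.sum_nonneg fun k _ =>
      Finset.sum_nonneg fun k' _ => hF _ _ _ _) _ _ hj
  linarith

lemma term_lb (θ δ w z c : ℝ) (hθ : 0 < θ) (hδ : 0 < δ)
    (hsl : |c| + θ ≤ |z|) (hw : δ^4 ≤ w) : θ^2 * δ^4 ≤ w * (z^2 - c^2) := by
  have h0 : (0:ℝ) ≤ |c| + θ := by positivity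
  have h2 : (|c| + θ)^2 ≤ |z|^2 := by nlinarith [abs_nonneg z]
  have h1 : θ^2 ≤ z^2 - c^2 := by nlinarith [sq_abs z, sq_abs c, abs_nonneg c]
  have hδ4 : (0:ℝ) < δ^4 := by positivity
  calc θ^2 * δ^4 ≤ (z^2 - c^2) * w :=
        mul_le_mul h1 hw hδ4.le (by nlinarith)
    _ = w * (z^2 - c^2) := mul_comm _ _

lemma wbound (δ u v s t : ℝ) (hδ : 0 < δ) (h1 : δ ≤ u) (h2 : δ ≤ v) (h3 : δ ≤ s)
    (h4 : δ ≤ t) : δ^4 ≤ u * v * (s * t) := by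
  have huv : δ * δ ≤ u * v := mul_le_mul h1 h2 hδ.le (hδ.le.trans h1)
  have hst : δ * δ ≤ s * t := mul_le_mul h3 h4 hδ.le (hδ.le.trans h3)
  calc δ^4 = (δ * δ) * (δ * δ) := by ring
    _ ≤ (u * v) * (s * t) :=
        mul_le_mul huv hst (by positivity)
          (mul_nonneg (hδ.le.trans h1) (hδ.le.trans h2))

theorem stmt10 {n m : ℕ} (A B : Matrix (Fin n) (Fin m) ℝ) (θ δ : ℝ)
    (hθ : 0 < θ) (hδ : 0 < δ)
    (Z : Matrix (Fin n) (Fin m) ℝ) (C : Matrix (Fin n) (Fin m) ℝ)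
    (hZ : Z = (1/2 : ℝ) • (A - B)) (hC : C = (1/2 : ℝ) • (A + B))
    (hdom : Dominates Z C)
    (hslack : ∃ j j' k k',
      |C j k + C j' k' - C j k' - C j' k| + θ ≤ |Z j k + Z j' k' - Z j k' - Z j' k|)
    (x : Fin n → ℝ) (y : Fin m → ℝ) (hx : IsProbVec x) (hy : IsProbVec y)
    (hxδ : ∀ j, δ ≤ x j) (hyδ : ∀ k, δ ≤ y k) :
    θ^2 * δ^4 ≤ Cfun A B x y := by
  obtain ⟨hx0, hx1⟩ := hx
  obtain ⟨hy0, hy1⟩ := hy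
  obtain ⟨j0, j0', k0, k0', hsl⟩ := hslack
  have hZe : ∀ j k, Z j k = (A j k - B j k) / 2 := by
    intro j k; rw [hZ]; simp [Matrix.smul_apply, Matrix.sub_apply, smul_eq_mul]; ring
  have hCe : ∀ j k, C j k = (A j k + B j k) / 2 := by
    intro j k; rw [hC]; simp [Matrix.smul_apply, Matrix.add_apply, smul_eq_mul]; ring
  -- centered functions
  have ha : ∀ j, ∑ k, (A j k - ∑ k', A j k' * y k') * y k = 0 := by
    intro j
    simp [sub_mul, Finset.sum_sub_distrib, ← Finset.mul_sum, hy1]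
  have hb : ∀ k, ∑ j, (B j k - ∑ j', B j' k * x j') * x j = 0 := by
    intro k
    simp [sub_mul, Finset.sum_sub_distrib, ← Finset.mul_sum, hx1]
  have hmain : ∑ j, ∑ j', ∑ k, ∑ k', (x j * x j' * (y k * y k')) *
      (((A j k - ∑ k'', A j k'' * y k'') + (A j' k' - ∑ k'', A j' k'' * y k'')
        - (A j k' - ∑ k'', A j k'' * y k'') - (A j' k - ∑ k'', A j' k'' * y k''))
      * ((B j k - ∑ j'', B j'' k * x j'') + (B j' k' - ∑ j'', B j'' k' * x j'')
        - (B j k' - ∑ j'', B j'' k' * x j'') - (B j' k - ∑ j'', B j'' k * x j'')))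
      = 4 * ∑ j, ∑ k, x j * y k *
        ((A j k - ∑ k', A j k' * y k') * (B j k - ∑ j', B j' k * x j')) :=
    main_ident x y hx1 hy1 (fun j k => A j k - ∑ k', A j k' * y k')
      (fun j k => B j k - ∑ j', B j' k * x j') ha hb
  have hCfun : Cfun A B x y = -∑ j, ∑ k, x j * y k *
      ((A j k - ∑ k', A j k' * y k') * (B j k - ∑ j', B j' k * x j')) := by
    unfold Cfun
    congr 1
    exact Finset.sum_congr rfl fun j _ => Finset.sum_congr rfl fun k _ => by ring
  have key : (∑ j, ∑ j', ∑ k, ∑ k', (x j * x j' * (y k * y k')) *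
      ((Z j k + Z j' k' - Z j k' - Z j' k)^2 - (C j k + C j' k' - C j k' - C j' k)^2))
      = 4 * Cfun A B x y := by
    have e : ∀ j j' k k', (x j * x j' * (y k * y k')) *
        ((Z j k + Z j' k' - Z j k' - Z j' k)^2 - (C j k + C j' k' - C j k' - C j' k)^2)
        = -((x j * x j' * (y k * y k')) *
          (((A j k - ∑ k'', A j k'' * y k'') + (A j' k' - ∑ k'', A j' k'' * y k'')
            - (A j k' - ∑ k'', A j k'' * y k'') - (A j' k - ∑ k'', A j' k'' * y k''))
          * ((B j k - ∑ j'', B j'' k * x j'') + (B j' k' - ∑ j'', B j'' k' * x j'')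
            - (B j k' - ∑ j'', B j'' k' * x j'') - (B j' k - ∑ j'', B j'' k * x j'')))) := by
      intro j j' k k'
      rw [hZe j k, hZe j' k', hZe j k', hZe j' k, hCe j k, hCe j' k', hCe j k', hCe j' k]
      ring
    calc ∑ j, ∑ j', ∑ k, ∑ k', (x j * x j' * (y k * y k')) *
          ((Z j k + Z j' k' - Z j k' - Z j' k)^2 - (C j k + C j' k' - C j k' - C j' k)^2)
        = ∑ j, ∑ j', ∑ k, ∑ k', -((x j * x j' * (y k * y k')) *
          (((A j k - ∑ k'', A j k'' * y k'') + (A j' k' - ∑ k'', A j' k'' * y k'')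
            - (A j k' - ∑ k'', A j k'' * y k'') - (A j' k - ∑ k'', A j' k'' * y k''))
          * ((B j k - ∑ j'', B j'' k * x j'') + (B j' k' - ∑ j'', B j'' k' * x j'')
            - (B j k' - ∑ j'', B j'' k' * x j'') - (B j' k - ∑ j'', B j'' k * x j'')))) :=
          Finset.sum_congr rfl fun j _ => Finset.sum_congr rfl fun j' _ =>
            Finset.sum_congr rfl fun k _ => Finset.sum_congr rfl fun k' _ => e j j' k k'
      _ = -(∑ j, ∑ j', ∑ k, ∑ k', (x j * x j' * (y k * y k')) *
          (((A j k - ∑ k'', A j k'' * y k'') + (A j' k' - ∑ k'', A j' k'' * y k'')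
            - (A j k' - ∑ k'', A j k'' * y k'') - (A j' k - ∑ k'', A j' k'' * y k''))
          * ((B j k - ∑ j'', B j'' k * x j'') + (B j' k' - ∑ j'', B j'' k' * x j'')
            - (B j k' - ∑ j'', B j'' k' * x j'') - (B j' k - ∑ j'', B j'' k * x j'')))) := by
          simp [Finset.sum_neg_distrib]
      _ = -(4 * ∑ j, ∑ k, x j * y k *
          ((A j k - ∑ k', A j k' * y k') * (B j k - ∑ j', B j' k * x j'))) := by
          rw [hmain]
      _ = 4 * Cfun A B x y := by rw [hCfun]; ring
  -- distinctness of slack indices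
  have hne_j : j0 ≠ j0' := by
    intro h
    rw [← h] at hsl
    rw [show Z j0 k0 + Z j0 k0' - Z j0 k0' - Z j0 k0 = 0 by ring, abs_zero] at hsl
    have := abs_nonneg (C j0 k0 + C j0 k0' - C j0 k0' - C j0 k0)
    linarith
  have hne_k : k0 ≠ k0' := by
    intro h
    rw [← h] at hsl
    rw [show Z j0 k0 + Z j0' k0 - Z j0 k0 - Z j0' k0 = 0 by ring, abs_zero] at hsl
    have := abs_nonneg (C j0 k0 + C j0' k0 - C j0 k0 - C j0' k0)
    linarith
  -- nonnegativity of all terms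
  have hpos : ∀ j j' k k', 0 ≤ (x j * x j' * (y k * y k')) *
      ((Z j k + Z j' k' - Z j k' - Z j' k)^2 - (C j k + C j' k' - C j k' - C j' k)^2) := by
    intro j j' k k'
    have hd := hdom j j' k k'
    have h1 : (C j k + C j' k' - C j k' - C j' k)^2 ≤ (Z j k + Z j' k' - Z j k' - Z j' k)^2 := by
      calc (C j k + C j' k' - C j k' - C j' k)^2
          = |C j k + C j' k' - C j k' - C j' k|^2 := (sq_abs _).symm
        _ ≤ |Z j k + Z j' k' - Z j k' - Z j' k|^2 :=
            pow_le_pow_left₀ (abs_nonneg _) hd 2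
        _ = (Z j k + Z j' k' - Z j k' - Z j' k)^2 := sq_abs _
    exact mul_nonneg
      (mul_nonneg (mul_nonneg (hx0 j) (hx0 j')) (mul_nonneg (hy0 k) (hy0 k')))
      (by linarith)
  -- the four slack bounds
  have hw : ∀ j j' k k', δ^4 ≤ x j * x j' * (y k * y k') := fun j j' k k' =>
    wbound δ _ _ _ _ hδ (hxδ j) (hxδ j') (hyδ k) (hyδ k')
  have habs : ∀ (M : Matrix (Fin n) (Fin m) ℝ),
      |M j0 k0' + M j0' k0 - M j0 k0 - M j0' k0'| =
      |M j0 k0 + M j0' k0' - M j0 k0' - M j0' k0| := by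
    intro M
    rw [show M j0 k0' + M j0' k0 - M j0 k0 - M j0' k0'
      = -(M j0 k0 + M j0' k0' - M j0 k0' - M j0' k0) by ring, abs_neg]
  have habs2 : ∀ (M : Matrix (Fin n) (Fin m) ℝ),
      |M j0' k0 + M j0 k0' - M j0' k0' - M j0 k0| =
      |M j0 k0 + M j0' k0' - M j0 k0' - M j0' k0| := by
    intro M
    rw [show M j0' k0 + M j0 k0' - M j0' k0' - M j0 k0
      = -(M j0 k0 + M j0' k0' - M j0 k0' - M j0' k0) by ring, abs_neg]
  have habs3 : ∀ (M : Matrix (Fin n) (Fin m) ℝ),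
      |M j0' k0' + M j0 k0 - M j0' k0 - M j0 k0'| =
      |M j0 k0 + M j0' k0' - M j0 k0' - M j0' k0| := by
    intro M
    rw [show M j0' k0' + M j0 k0 - M j0' k0 - M j0 k0'
      = M j0 k0 + M j0' k0' - M j0 k0' - M j0' k0 by ring]
  have h1 : θ^2 * δ^4 ≤ (x j0 * x j0' * (y k0 * y k0')) *
      ((Z j0 k0 + Z j0' k0' - Z j0 k0' - Z j0' k0)^2
        - (C j0 k0 + C j0' k0' - C j0 k0' - C j0' k0)^2) :=
    term_lb θ δ _ _ _ hθ hδ hsl (hw _ _ _ _)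
  have h2 : θ^2 * δ^4 ≤ (x j0 * x j0' * (y k0' * y k0)) *
      ((Z j0 k0' + Z j0' k0 - Z j0 k0 - Z j0' k0')^2
        - (C j0 k0' + C j0' k0 - C j0 k0 - C j0' k0')^2) :=
    term_lb θ δ _ _ _ hθ hδ (by rw [habs Z, habs C]; exact hsl) (hw _ _ _ _)
  have h3 : θ^2 * δ^4 ≤ (x j0' * x j0 * (y k0 * y k0')) *
      ((Z j0' k0 + Z j0 k0' - Z j0' k0' - Z j0 k0)^2
        - (C j0' k0 + C j0 k0' - C j0' k0' - C j0 k0)^2) :=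
    term_lb θ δ _ _ _ hθ hδ (by rw [habs2 Z, habs2 C]; exact hsl) (hw _ _ _ _)
  have h4 : θ^2 * δ^4 ≤ (x j0' * x j0 * (y k0' * y k0)) *
      ((Z j0' k0' + Z j0 k0 - Z j0' k0 - Z j0 k0')^2
        - (C j0' k0' + C j0 k0 - C j0' k0 - C j0 k0')^2) :=
    term_lb θ δ _ _ _ hθ hδ (by rw [habs3 Z, habs3 C]; exact hsl) (hw _ _ _ _)
  have hbound := four_tuple_bound
    (fun j j' k k' => (x j * x j' * (y k * y k')) *
      ((Z j k + Z j' k' - Z j k' - Z j' k)^2 - (C j k + C j' k' - C j k' - C j' k)^2))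
    hpos j0 j0' k0 k0' hne_j hne_k (θ^2 * δ^4) h1 h2 h3 h4
  rw [key] at hbound
  linarith
end

section
/- For any real n×m matrix C, any δ > 0, and any probability vectors x ∈ Δⁿ, y ∈ Δᵐ with all entries at least δ, the quantity C_{(C,-C)}(x,y) satisfies (r(C)·δ)² ≤ C_{(C,-C)}(x,y) ≤ r(C)², where r(C) = min over g ∈ ℝⁿ, h ∈ ℝᵐ of max_{j,k} |C_{jk} - g_j - h_k|. -/
open Finset Matrix

lemma key_alg {n m : ℕ} (x : Fin n → ℝ) (y : Fin m → ℝ)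
    (a : Fin n → Fin m → ℝ) (g0 : Fin n → ℝ) (β : Fin m → ℝ) (μ : ℝ)
    (hx1 : ∑ j, x j = 1)
    (ha0 : ∀ j, ∑ k, y k * a j k = 0)
    (hβ : ∀ k, β k = ∑ j, x j * a j k) :
    ∑ j, ∑ k, x j * y k * (a j k * (a j k + g0 j - β k - μ)) =
    ∑ j, ∑ k, x j * y k * (a j k - β k)^2 := by
  have step : ∀ j, ∑ k, (x j * y k * (a j k * (a j k + g0 j - β k - μ)) - x j * y k * (a j k - β k)^2)
      = x j * (∑ k, y k * a j k * β k) - x j * (∑ k, y k * β k ^ 2) := by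
    intro j
    have expand : ∀ k, x j * y k * (a j k * (a j k + g0 j - β k - μ)) - x j * y k * (a j k - β k)^2
        = (x j * g0 j - μ * x j) * (y k * a j k) + x j * (y k * a j k * β k) - x j * (y k * β k ^ 2) := by
      intro k; ring
    simp_rw [expand]
    rw [Finset.sum_sub_distrib, Finset.sum_add_distrib, ← Finset.mul_sum, ← Finset.mul_sum,
      ← Finset.mul_sum, ha0 j]
    ring
  have main : ∑ j, ∑ k, (x j * y k * (a j k * (a j k + g0 j - β k - μ)) - x j * y k * (a j k - β k)^2) = 0 := by
    simp_rw [step]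
    rw [Finset.sum_sub_distrib]
    have h1 : ∑ j, x j * ∑ k, y k * a j k * β k = ∑ k, y k * β k ^ 2 := by
      simp_rw [Finset.mul_sum]
      rw [Finset.sum_comm]
      have : ∀ k, ∑ j, x j * (y k * a j k * β k) = y k * β k ^ 2 := by
        intro k
        have : ∀ j, x j * (y k * a j k * β k) = (y k * β k) * (x j * a j k) := by intro j; ring
        simp_rw [this, ← Finset.mul_sum, ← hβ k]
        ring
      simp_rw [this]
    have h2 : ∑ j, x j * ∑ k, y k * β k ^ 2 = ∑ k, y k * β k ^ 2 := by
      rw [← Finset.sum_mul, hx1, one_mul]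
    rw [h1, h2, sub_self]
  calc ∑ j, ∑ k, x j * y k * (a j k * (a j k + g0 j - β k - μ))
      = ∑ j, ∑ k, x j * y k * (a j k - β k)^2 + ∑ j, ∑ k, (x j * y k * (a j k * (a j k + g0 j - β k - μ)) - x j * y k * (a j k - β k)^2) := by
        rw [← Finset.sum_add_distrib]
        congr 1; ext j
        rw [← Finset.sum_add_distrib]
        congr 1; ext k; ring
    _ = ∑ j, ∑ k, x j * y k * (a j k - β k)^2 := by rw [main, add_zero]

lemma orth {n m : ℕ} (x : Fin n → ℝ) (y : Fin m → ℝ)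
    (R : Fin n → Fin m → ℝ) (u : Fin n → ℝ) (v : Fin m → ℝ)
    (hx0 : ∀ j, 0 ≤ x j) (hy0 : ∀ k, 0 ≤ y k)
    (hR1 : ∀ j, ∑ k, y k * R j k = 0) (hR2 : ∀ k, ∑ j, x j * R j k = 0) :
    ∑ j, ∑ k, x j * y k * (R j k)^2 ≤ ∑ j, ∑ k, x j * y k * (R j k + u j + v k)^2 := by
  have cross1 : ∑ j, ∑ k, x j * y k * (R j k * u j) = 0 := by
    have h : ∀ j, ∑ k, x j * y k * (R j k * u j) = (x j * u j) * ∑ k, y k * R j k := by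
      intro j; rw [Finset.mul_sum]; congr 1; ext k; ring
    simp_rw [h]
    simp [hR1]
  have cross2 : ∑ j, ∑ k, x j * y k * (R j k * v k) = 0 := by
    rw [Finset.sum_comm]
    have h : ∀ k, ∑ j, x j * y k * (R j k * v k) = (y k * v k) * ∑ j, x j * R j k := by
      intro k; rw [Finset.mul_sum]; congr 1; ext j; ring
    simp_rw [h]
    simp [hR2]
  have expand : ∀ j k, x j * y k * (R j k + u j + v k)^2
      = x j * y k * (R j k)^2 + x j * y k * (u j + v k)^2
        + 2 * (x j * y k * (R j k * u j)) + 2 * (x j * y k * (R j k * v k)) := by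
    intro j k; ring
  simp_rw [expand, Finset.sum_add_distrib, ← Finset.mul_sum]
  rw [cross1, cross2]
  have pos : 0 ≤ ∑ j, ∑ k, x j * y k * (u j + v k)^2 := by
    apply Finset.sum_nonneg; intro j _
    apply Finset.sum_nonneg; intro k _
    have := hx0 j; have := hy0 k; positivity
  linarith

theorem stmt11 {n m : ℕ} (C : Matrix (Fin n) (Fin m) ℝ) (δ : ℝ) (hδ : 0 < δ)
    (r : ℝ)
    (hr : IsLeast {t : ℝ | 0 ≤ t ∧ ∃ (g : Fin n → ℝ) (h : Fin m → ℝ),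
      ∀ j k, |C j k - g j - h k| ≤ t} r)
    (x : Fin n → ℝ) (y : Fin m → ℝ) (hx : IsProbVec x) (hy : IsProbVec y)
    (hxδ : ∀ j, δ ≤ x j) (hyδ : ∀ k, δ ≤ y k) :
    (r * δ)^2 ≤ Cfun C (-C) x y ∧ Cfun C (-C) x y ≤ r^2 := by
  obtain ⟨⟨hr0, g, h, hgh⟩, hlb⟩ := hr
  obtain ⟨hx0, hx1⟩ := hx
  obtain ⟨hy0, hy1⟩ := hy
  set g0 : Fin n → ℝ := fun j => ∑ k', C j k' * y k' with hg0def
  set a : Fin n → Fin m → ℝ := fun j k => C j k - g0 j with hadef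
  set β : Fin m → ℝ := fun k => ∑ j, x j * a j k with hβdef
  set μ : ℝ := ∑ j, x j * g0 j with hμdef
  have ha0 : ∀ j, ∑ k, y k * a j k = 0 := by
    intro j
    have e : ∀ k, y k * a j k = C j k * y k - g0 j * y k := by
      intro k; simp only [hadef]; ring
    simp_rw [e]
    rw [Finset.sum_sub_distrib, ← Finset.mul_sum, hy1, mul_one, hg0def]
    exact sub_self _
  have hb : ∀ j k, C j k - ∑ j', C j' k * x j' = a j k + g0 j - β k - μ := by
    intro j k
    have e : β k + μ = ∑ j', C j' k * x j' := by
      rw [hβdef, hμdef, ← Finset.sum_add_distrib]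
      congr 1; ext j'
      simp only [hadef]; ring
    simp only [hadef]
    linarith
  have hCf : Cfun C (-C) x y = ∑ j, ∑ k, x j * y k * (a j k * (C j k - ∑ j', C j' k * x j')) := by
    unfold Cfun
    rw [← Finset.sum_neg_distrib]
    congr 1; ext j
    rw [← Finset.sum_neg_distrib]
    congr 1; ext k
    simp only [Matrix.neg_apply, neg_mul, Finset.sum_neg_distrib, hadef, hg0def]
    ring
  have hkey : Cfun C (-C) x y = ∑ j, ∑ k, x j * y k * (a j k - β k)^2 := by
    rw [hCf]
    simp_rw [hb]
    exact key_alg x y a g0 β μ hx1 ha0 (fun k => rfl)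
  have hCnonneg : 0 ≤ Cfun C (-C) x y := by
    rw [hkey]
    apply Finset.sum_nonneg; intro j _
    apply Finset.sum_nonneg; intro k _
    have := hx0 j; have := hy0 k; positivity
  -- zero mean properties of R = a - β
  have hyβ : ∑ k, y k * β k = 0 := by
    simp_rw [hβdef, Finset.mul_sum]
    rw [Finset.sum_comm]
    have e : ∀ j, ∑ k, y k * (x j * a j k) = x j * ∑ k, y k * a j k := by
      intro j; rw [Finset.mul_sum]; congr 1; ext k; ring
    simp_rw [e]
    simp [ha0]
  have hR1 : ∀ j, ∑ k, y k * (a j k - β k) = 0 := by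
    intro j
    have e : ∀ k, y k * (a j k - β k) = y k * a j k - y k * β k := by intro k; ring
    simp_rw [e]
    rw [Finset.sum_sub_distrib, ha0 j, hyβ, sub_self]
  have hR2 : ∀ k, ∑ j, x j * (a j k - β k) = 0 := by
    intro k
    have e : ∀ j, x j * (a j k - β k) = x j * a j k - x j * β k := by intro j; ring
    simp_rw [e]
    rw [Finset.sum_sub_distrib, ← Finset.sum_mul, hx1, one_mul]
    simp only [hβdef]
    exact sub_self _
  constructor
  · -- lower bound
    by_cases hne : Nonempty (Fin n × Fin m)
    · obtain ⟨⟨j0, k0⟩, _, hmax⟩ := Finset.exists_max_image (univ : Finset (Fin n × Fin m))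
        (fun p => |a p.1 p.2 - β p.2|) univ_nonempty
      have hrT : r ≤ |a j0 k0 - β k0| := by
        apply hlb
        refine ⟨abs_nonneg _, g0, β, fun j k => ?_⟩
        have : C j k - g0 j - β k = a j k - β k := by simp only [hadef]
        rw [this]
        exact hmax (j, k) (mem_univ _)
      have h1 : r^2 ≤ (a j0 k0 - β k0)^2 := by
        calc r^2 ≤ |a j0 k0 - β k0|^2 := pow_le_pow_left₀ hr0 hrT 2
          _ = (a j0 k0 - β k0)^2 := sq_abs _
      have h2 : δ * δ ≤ x j0 * y k0 :=
        mul_le_mul (hxδ j0) (hyδ k0) hδ.le (hδ.le.trans (hxδ j0))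
      have h3 : r^2 * (δ*δ) ≤ (a j0 k0 - β k0)^2 * (x j0 * y k0) :=
        mul_le_mul h1 h2 (by positivity) (sq_nonneg _)
      have h4 : x j0 * y k0 * (a j0 k0 - β k0)^2 ≤ ∑ j, ∑ k, x j * y k * (a j k - β k)^2 := by
        have inner : ∀ j, (0:ℝ) ≤ ∑ k, x j * y k * (a j k - β k)^2 := by
          intro j
          apply Finset.sum_nonneg; intro k _
          have := hx0 j; have := hy0 k; positivity
        calc x j0 * y k0 * (a j0 k0 - β k0)^2
            ≤ ∑ k, x j0 * y k * (a j0 k - β k)^2 := by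
              apply Finset.single_le_sum (f := fun k => x j0 * y k * (a j0 k - β k)^2)
              · intro k _; have := hx0 j0; have := hy0 k; positivity
              · exact mem_univ k0
          _ ≤ ∑ j, ∑ k, x j * y k * (a j k - β k)^2 :=
              Finset.single_le_sum (f := fun j => ∑ k, x j * y k * (a j k - β k)^2)
                (fun j _ => inner j) (mem_univ j0)
      rw [hkey]
      calc (r * δ)^2 = r^2 * (δ*δ) := by ring
        _ ≤ (a j0 k0 - β k0)^2 * (x j0 * y k0) := h3
        _ = x j0 * y k0 * (a j0 k0 - β k0)^2 := by ring
        _ ≤ _ := h4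
    · have hr0' : r ≤ 0 := by
        apply hlb
        exact ⟨le_refl 0, fun _ => 0, fun _ => 0, fun j k => absurd ⟨(j, k)⟩ hne⟩
      have : r = 0 := le_antisymm hr0' hr0
      rw [this]
      simpa using hCnonneg
  · -- upper bound
    rw [hkey]
    have step1 : ∑ j, ∑ k, x j * y k * (a j k - β k)^2
        ≤ ∑ j, ∑ k, x j * y k * ((a j k - β k) + (g0 j - g j) + (β k - h k))^2 :=
      orth x y (fun j k => a j k - β k) (fun j => g0 j - g j) (fun k => β k - h k)
        hx0 hy0 hR1 hR2
    have step2 : ∑ j, ∑ k, x j * y k * ((a j k - β k) + (g0 j - g j) + (β k - h k))^2 ≤ r^2 := by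
      have e : ∀ j k, (a j k - β k) + (g0 j - g j) + (β k - h k) = C j k - g j - h k := by
        intro j k; simp only [hadef]; ring
      simp_rw [e]
      have bnd : ∀ j k, x j * y k * (C j k - g j - h k)^2 ≤ x j * y k * r^2 := by
        intro j k
        apply mul_le_mul_of_nonneg_left
        · calc (C j k - g j - h k)^2 = |C j k - g j - h k|^2 := (sq_abs _).symm
            _ ≤ r^2 := pow_le_pow_left₀ (abs_nonneg _) (hgh j k) 2
        · exact mul_nonneg (hx0 j) (hy0 k)
      calc ∑ j, ∑ k, x j * y k * (C j k - g j - h k)^2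
          ≤ ∑ j, ∑ k, x j * y k * r^2 :=
            Finset.sum_le_sum (fun j _ => Finset.sum_le_sum (fun k _ => bnd j k))
        _ = r^2 := by
            have e2 : ∀ j, ∑ k, x j * y k * r^2 = x j * r^2 := by
              intro j
              have : ∀ k, x j * y k * r^2 = (x j * r^2) * y k := by intro k; ring
              simp_rw [this, ← Finset.mul_sum, hy1, mul_one]
            simp_rw [e2, ← Finset.sum_mul, hx1, one_mul]
    linarith [step1, step2]
end

section
/- For any real n×m matrix Z and probability vectors x ∈ Δⁿ, y ∈ Δᵐ, C_{(Z,-Z)}(x,y) equals the minimum over g ∈ ℝⁿ, h ∈ ℝᵐ of Σ_{j,k} x_j y_k (Z_{jk} - g_j - h_k)². -/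
open Finset Matrix

theorem stmt12 {n m : ℕ} (Z : Matrix (Fin n) (Fin m) ℝ)
    (x : Fin n → ℝ) (y : Fin m → ℝ) (hx : IsProbVec x) (hy : IsProbVec y) :
    IsLeast {s : ℝ | ∃ (g : Fin n → ℝ) (h : Fin m → ℝ),
        s = ∑ j, ∑ k, x j * y k * (Z j k - g j - h k)^2}
      (Cfun Z (-Z) x y) := by
  obtain ⟨hx0, hx1⟩ := hx
  obtain ⟨hy0, hy1⟩ := hy
  set μ : ℝ := ∑ j, ∑ k, x j * y k * Z j k with hμ
  set a : Fin n → ℝ := fun j => ∑ k, Z j k * y k with ha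
  set b : Fin m → ℝ := fun k => (∑ j, Z j k * x j) - μ with hb
  -- basic sums
  have hsa : ∑ j, x j * a j = μ := by
    rw [hμ]
    refine Finset.sum_congr rfl fun j _ => ?_
    simp only [ha, Finset.mul_sum]
    exact Finset.sum_congr rfl fun k _ => by ring
  have hμswap : ∑ k, y k * (∑ j, Z j k * x j) = μ := by
    rw [hμ, Finset.sum_comm]
    refine Finset.sum_congr rfl fun k _ => ?_
    rw [Finset.mul_sum]
    exact Finset.sum_congr rfl fun j _ => by ring
  have hsb : ∑ k, y k * b k = 0 := by
    simp only [hb, mul_sub]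
    rw [Finset.sum_sub_distrib, hμswap, ← Finset.sum_mul, hy1]; ring
  -- column sums of the row-centered part
  have hcolu : ∀ k, ∑ j, x j * (Z j k - a j) = b k := by
    intro k
    simp only [mul_sub]
    rw [Finset.sum_sub_distrib, hsa]
    simp only [hb]
    congr 1
    exact Finset.sum_congr rfl fun j _ => by ring
  have hrowu : ∀ j, ∑ k, y k * (Z j k - a j) = 0 := by
    intro j
    simp only [mul_sub]
    rw [Finset.sum_sub_distrib, ← Finset.sum_mul, hy1]
    have h1 : ∑ k, y k * Z j k = a j := by
      simp only [ha]; exact Finset.sum_congr rfl fun k _ => by ring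
    rw [h1]; ring
  -- row/column sums of the residual
  have hrow : ∀ j, ∑ k, y k * (Z j k - a j - b k) = 0 := by
    intro j
    have pt : ∀ k, y k * (Z j k - a j - b k)
        = y k * Z j k - (y k * a j + y k * b k) := fun k => by ring
    simp only [pt]
    rw [Finset.sum_sub_distrib, Finset.sum_add_distrib]
    have h1 : ∑ k, y k * Z j k = a j := by
      simp only [ha]; exact Finset.sum_congr rfl fun k _ => by ring
    have h2 : ∑ k, y k * a j = a j := by
      rw [← Finset.sum_mul, hy1, one_mul]
    rw [h1, h2, hsb]; ring
  have hcol : ∀ k, ∑ j, x j * (Z j k - a j - b k) = 0 := by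
    intro k
    have pt : ∀ j, x j * (Z j k - a j - b k)
        = x j * (Z j k - a j) - x j * b k := fun j => by ring
    simp only [pt]
    rw [Finset.sum_sub_distrib, hcolu, ← Finset.sum_mul, hx1]; ring
  -- cross-term vanishes
  have hcross : ∀ (g : Fin n → ℝ) (h : Fin m → ℝ),
      ∑ j, ∑ k, x j * y k *
        ((Z j k - a j - b k) * ((a j - g j) + (b k - h k))) = 0 := by
    intro g h
    have pt : ∀ j k, x j * y k * ((Z j k - a j - b k) * ((a j - g j) + (b k - h k)))
        = (x j * (a j - g j)) * (y k * (Z j k - a j - b k))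
          + x j * ((y k * (b k - h k)) * (Z j k - a j - b k)) := by
      intro j k; ring
    simp only [pt]
    simp only [Finset.sum_add_distrib]
    have t1 : ∑ j, ∑ k, (x j * (a j - g j)) * (y k * (Z j k - a j - b k)) = 0 := by
      refine Finset.sum_eq_zero fun j _ => ?_
      rw [← Finset.mul_sum, hrow j, mul_zero]
    have t2 : ∑ j, ∑ k, x j * ((y k * (b k - h k)) * (Z j k - a j - b k)) = 0 := by
      rw [Finset.sum_comm]
      refine Finset.sum_eq_zero fun k _ => ?_
      have pt2 : ∀ j, x j * ((y k * (b k - h k)) * (Z j k - a j - b k))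
          = (y k * (b k - h k)) * (x j * (Z j k - a j - b k)) := fun j => by ring
      simp only [pt2]
      rw [← Finset.mul_sum, hcol k, mul_zero]
    rw [t1, t2]; ring
  -- decomposition of the objective
  have hF : ∀ (g : Fin n → ℝ) (h : Fin m → ℝ),
      ∑ j, ∑ k, x j * y k * (Z j k - g j - h k)^2
        = (∑ j, ∑ k, x j * y k * (Z j k - a j - b k)^2)
          + ∑ j, ∑ k, x j * y k * ((a j - g j) + (b k - h k))^2 := by
    intro g h
    have pt : ∀ j k, x j * y k * (Z j k - g j - h k)^2
        = (x j * y k * (Z j k - a j - b k)^2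
          + x j * y k * ((a j - g j) + (b k - h k))^2)
          + 2 * (x j * y k * ((Z j k - a j - b k) * ((a j - g j) + (b k - h k)))) := by
      intro j k; ring
    simp only [pt]
    simp only [Finset.sum_add_distrib]
    rw [show ∑ j, ∑ k, 2 * (x j * y k * ((Z j k - a j - b k) * ((a j - g j) + (b k - h k))))
        = 2 * ∑ j, ∑ k, (x j * y k * ((Z j k - a j - b k) * ((a j - g j) + (b k - h k))))
      from by simp only [← Finset.mul_sum]]
    rw [hcross g h]
    ring
  -- Cfun equals the sum of squared residuals
  have hC1 : Cfun Z (-Z) x y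
      = ∑ j, ∑ k, x j * y k * (Z j k - a j) * (Z j k - (b k + μ)) := by
    simp only [Cfun, Matrix.neg_apply]
    rw [← Finset.sum_neg_distrib]
    refine Finset.sum_congr rfl fun j _ => ?_
    rw [← Finset.sum_neg_distrib]
    refine Finset.sum_congr rfl fun k _ => ?_
    have hbk : ∑ j', Z j' k * x j' = b k + μ := by simp only [hb]; ring
    have h2 : ∑ j', -Z j' k * x j' = -(b k + μ) := by
      rw [← hbk, ← Finset.sum_neg_distrib]
      exact Finset.sum_congr rfl fun j' _ => by ring
    have h1 : ∑ k', Z j k' * y k' = a j := by simp only [ha]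
    rw [h2, h1]
    ring
  have E1 : ∑ j, ∑ k, x j * y k * b k^2 = ∑ k, y k * b k^2 := by
    rw [Finset.sum_comm]
    refine Finset.sum_congr rfl fun k _ => ?_
    have pt : ∀ j, x j * y k * b k^2 = (y k * b k^2) * x j := fun j => by ring
    simp only [pt]
    rw [← Finset.mul_sum, hx1, mul_one]
  have E2 : ∑ j, ∑ k, y k * b k * (x j * (Z j k - a j)) = ∑ k, y k * b k^2 := by
    rw [Finset.sum_comm]
    refine Finset.sum_congr rfl fun k _ => ?_
    rw [← Finset.mul_sum, hcolu k]
    ring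
  have E3 : ∑ j, ∑ k, μ * (y k * (x j * (Z j k - a j))) = 0 := by
    rw [Finset.sum_comm]
    have inner : ∀ k, ∑ j, μ * (y k * (x j * (Z j k - a j))) = μ * (y k * b k) := by
      intro k
      have pt : ∀ j, μ * (y k * (x j * (Z j k - a j)))
          = (μ * y k) * (x j * (Z j k - a j)) := fun j => by ring
      simp only [pt]
      rw [← Finset.mul_sum, hcolu k]
      ring
    simp only [inner]
    have pt : ∀ k, μ * (y k * b k) = μ * (y k * b k) := fun _ => rfl
    rw [← Finset.mul_sum, hsb, mul_zero]
  have E4 : ∑ j, ∑ k, x j * a j * (y k * (Z j k - a j)) = 0 := by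
    refine Finset.sum_eq_zero fun j _ => ?_
    rw [← Finset.mul_sum, hrowu j, mul_zero]
  have hC2 : ∑ j, ∑ k, x j * y k * (Z j k - a j) * (Z j k - (b k + μ))
      = ∑ j, ∑ k, x j * y k * (Z j k - a j - b k)^2 := by
    have key : ∑ j, ∑ k, x j * y k * (Z j k - a j - b k)^2
        = ∑ j, ∑ k, (x j * y k * (Z j k - a j) * (Z j k - (b k + μ))
            + (x j * y k * b k^2 - y k * b k * (x j * (Z j k - a j))
               + μ * (y k * (x j * (Z j k - a j)))
               - x j * a j * (y k * (Z j k - a j)))) := by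
      refine Finset.sum_congr rfl fun j _ => Finset.sum_congr rfl fun k _ => by ring
    symm
    rw [key]
    simp only [Finset.sum_add_distrib, Finset.sum_sub_distrib]
    rw [E1, E2, E3, E4]
    ring
  have hC : Cfun Z (-Z) x y = ∑ j, ∑ k, x j * y k * (Z j k - a j - b k)^2 :=
    hC1.trans hC2
  constructor
  · exact ⟨a, b, hC⟩
  · rintro s ⟨g, h, rfl⟩
    rw [hC, hF g h]
    refine le_add_of_nonneg_right ?_
    refine Finset.sum_nonneg fun j _ => Finset.sum_nonneg fun k _ => ?_
    exact mul_nonneg (mul_nonneg (hx0 j) (hy0 k)) (sq_nonneg _)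
end

section
/- Let (A, B) be a bimatrix game with zero-sum part Z = (A-B)/2 and coordination part C = (A+B)/2, and let δ > 0, θ > 0. If (r(Z)·δ)² ≥ r(C)² + (θδ)², then for all probability vectors x ∈ Δⁿ, y ∈ Δᵐ with all entries at least δ, C_{(A,B)}(x,y) ≥ θ²δ². -/
/-!
Double centering with respect to the weights `x ⊗ y` turns `C_{(A,B)}(x,y)` into `-⟪Ã, B̃⟫`, the
`x ⊗ y`-weighted inner product of the centered matrices. Centering is linear, so with
`A = Z + C`, `B = C - Z` this gives `C_{(A,B)} = ‖Z̃‖² - ‖C̃‖²`. Since `C̃` is orthogonal to all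
additive matrices `g j + h k`, it is the weighted least-squares residual of `C`, so
`‖C̃‖² ≤ r(C)²`. On the other hand `Z̃` is itself of the form `Z - g - h`, so one of its entries
has absolute value at least `r(Z)`, and that single term of `‖Z̃‖²` already gives `δ² r(Z)²`.
-/

open Finset Matrix

section WeightedCentering

variable {ι κ : Type*} [Fintype ι] [Fintype κ] (x : ι → ℝ) (y : κ → ℝ)

/-- Orthogonal, for the weights `x j * y k`, to every additive matrix `g j + h k`. -/
def doubleCenter (K : Matrix ι κ ℝ) : Matrix ι κ ℝ :=
  of fun j k => K j k - (K *ᵥ y) j - (x ᵥ* K) k + x ⬝ᵥ K *ᵥ y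

def weightedInner (M N : Matrix ι κ ℝ) : ℝ :=
  ∑ j, ∑ k, x j * y k * M j k * N j k

/-- The paper's `r(K)` is the least element of this set. -/
def additiveApproxBounds (K : Matrix ι κ ℝ) : Set ℝ :=
  {t | 0 ≤ t ∧ ∃ (g : ι → ℝ) (h : κ → ℝ), ∀ j k, |K j k - g j - h k| ≤ t}

lemma doubleCenter_apply (K : Matrix ι κ ℝ) (j : ι) (k : κ) :
    doubleCenter x y K j k = K j k - (K *ᵥ y) j - (x ᵥ* K) k + x ⬝ᵥ K *ᵥ y := rfl

lemma doubleCenter_add (K L : Matrix ι κ ℝ) :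
    doubleCenter x y (K + L) = doubleCenter x y K + doubleCenter x y L := by
  ext j k
  simp only [doubleCenter_apply, Matrix.add_apply, add_mulVec, vecMul_add, dotProduct_add,
    Pi.add_apply]
  ring

lemma doubleCenter_sub (K L : Matrix ι κ ℝ) :
    doubleCenter x y (K - L) = doubleCenter x y K - doubleCenter x y L := by
  ext j k
  simp only [doubleCenter_apply, Matrix.sub_apply, sub_mulVec, vecMul_sub, dotProduct_sub,
    Pi.sub_apply]
  ring

variable {x y}

lemma sum_mul_doubleCenter_row (hy : ∑ k, y k = 1) (K : Matrix ι κ ℝ) (j : ι) :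
    ∑ k, y k * doubleCenter x y K j k = 0 := by
  simp only [doubleCenter_apply, mul_add, mul_sub, sum_add_distrib, sum_sub_distrib, ← sum_mul, hy]
  have h1 : ∑ k, y k * K j k = (K *ᵥ y) j := by simp [mulVec, dotProduct, mul_comm]
  have h2 : ∑ k, y k * (x ᵥ* K) k = x ⬝ᵥ K *ᵥ y := by
    rw [dotProduct_mulVec, dotProduct_comm]; rfl
  rw [h1, h2]; ring

lemma sum_mul_doubleCenter_col (hx : ∑ j, x j = 1) (K : Matrix ι κ ℝ) (k : κ) :
    ∑ j, x j * doubleCenter x y K j k = 0 := by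
  simp only [doubleCenter_apply, mul_add, mul_sub, sum_add_distrib, sum_sub_distrib, ← sum_mul, hx]
  have h1 : ∑ j, x j * K j k = (x ᵥ* K) k := rfl
  have h2 : ∑ j, x j * (K *ᵥ y) j = x ⬝ᵥ K *ᵥ y := rfl
  rw [h1, h2]; ring

lemma sum_sum_doubleCenter_mul_add (hx : ∑ j, x j = 1) (hy : ∑ k, y k = 1)
    (K : Matrix ι κ ℝ) (g : ι → ℝ) (h : κ → ℝ) :
    ∑ j, ∑ k, x j * y k * doubleCenter x y K j k * (g j + h k) = 0 := by
  have split : ∀ j k, x j * y k * doubleCenter x y K j k * (g j + h k) =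
      x j * g j * (y k * doubleCenter x y K j k) + y k * h k * (x j * doubleCenter x y K j k) := by
    intro j k; ring
  simp only [split, sum_add_distrib, ← mul_sum, sum_mul_doubleCenter_row hy, mul_zero, zero_add]
  rw [sum_comm]
  simp only [← mul_sum, sum_mul_doubleCenter_col hx, mul_zero, sum_const_zero]

lemma sum_sum_sub_mulVec_mul_sub_vecMul (hx : ∑ j, x j = 1) (hy : ∑ k, y k = 1)
    (K L : Matrix ι κ ℝ) :
    ∑ j, ∑ k, x j * y k * (K j k - (K *ᵥ y) j) * (L j k - (x ᵥ* L) k) =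
      weightedInner x y (doubleCenter x y K) (doubleCenter x y L) := by
  set a : κ → ℝ := fun k => (x ᵥ* K) k - x ⬝ᵥ K *ᵥ y
  set b : ι → ℝ := fun j => (L *ᵥ y) j - x ⬝ᵥ L *ᵥ y
  have split : ∀ j k, x j * y k * (K j k - (K *ᵥ y) j) * (L j k - (x ᵥ* L) k) =
      x j * y k * doubleCenter x y K j k * doubleCenter x y L j k
        + x j * y k * doubleCenter x y K j k * (b j + 0)
        + x j * y k * doubleCenter x y L j k * (0 + a k)
        + x j * b j * (y k * a k) := by
    intro j k; simp only [a, b, doubleCenter_apply]; ring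
  have ha : ∑ k, y k * a k = 0 := by
    simp only [a, mul_sub, sum_sub_distrib, ← sum_mul, hy, one_mul]
    rw [dotProduct_mulVec, dotProduct_comm]
    exact sub_self _
  have hKb : ∑ j, ∑ k, x j * y k * doubleCenter x y K j k * (b j + 0) = 0 :=
    sum_sum_doubleCenter_mul_add hx hy K b fun _ => 0
  have hLa : ∑ j, ∑ k, x j * y k * doubleCenter x y L j k * (0 + a k) = 0 :=
    sum_sum_doubleCenter_mul_add hx hy L (fun _ => 0) a
  simp only [split, sum_add_distrib]
  rw [hKb, hLa, ← sum_mul_sum, ha, mul_zero, add_zero, add_zero, add_zero]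
  rfl

lemma weightedInner_doubleCenter_self_le (hx0 : ∀ j, 0 ≤ x j) (hy0 : ∀ k, 0 ≤ y k)
    (hx : ∑ j, x j = 1) (hy : ∑ k, y k = 1) (K : Matrix ι κ ℝ) (g : ι → ℝ) (h : κ → ℝ) :
    weightedInner x y (doubleCenter x y K) (doubleCenter x y K) ≤
      ∑ j, ∑ k, x j * y k * (K j k - g j - h k) ^ 2 := by
  set g' : ι → ℝ := fun j => (K *ᵥ y) j - g j
  set h' : κ → ℝ := fun k => (x ᵥ* K) k - x ⬝ᵥ K *ᵥ y - h k
  have split : ∀ j k, x j * y k * (K j k - g j - h k) ^ 2 =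
      x j * y k * doubleCenter x y K j k * doubleCenter x y K j k
        + x j * y k * doubleCenter x y K j k * (2 * g' j + 2 * h' k)
        + x j * y k * (g' j + h' k) ^ 2 := by
    intro j k; simp only [g', h', doubleCenter_apply]; ring
  have hrest : 0 ≤ ∑ j, ∑ k, x j * y k * (g' j + h' k) ^ 2 :=
    sum_nonneg fun j _ => sum_nonneg fun k _ =>
      mul_nonneg (mul_nonneg (hx0 j) (hy0 k)) (sq_nonneg _)
  simp only [split, sum_add_distrib, sum_sum_doubleCenter_mul_add hx hy, add_zero]
  exact le_add_of_nonneg_right hrest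

lemma weightedInner_doubleCenter_self_le_sq (hx0 : ∀ j, 0 ≤ x j) (hy0 : ∀ k, 0 ≤ y k)
    (hx : ∑ j, x j = 1) (hy : ∑ k, y k = 1) {K : Matrix ι κ ℝ} {r : ℝ}
    (hr : r ∈ additiveApproxBounds K) :
    weightedInner x y (doubleCenter x y K) (doubleCenter x y K) ≤ r ^ 2 := by
  obtain ⟨-, g, h, hgh⟩ := hr
  calc weightedInner x y (doubleCenter x y K) (doubleCenter x y K)
      ≤ ∑ j, ∑ k, x j * y k * (K j k - g j - h k) ^ 2 :=
        weightedInner_doubleCenter_self_le hx0 hy0 hx hy K g h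
    _ ≤ ∑ j, ∑ k, x j * y k * r ^ 2 :=
        sum_le_sum fun j _ => sum_le_sum fun k _ =>
          mul_le_mul_of_nonneg_left (sq_le_sq' (abs_le.mp (hgh j k)).1 (abs_le.mp (hgh j k)).2)
            (mul_nonneg (hx0 j) (hy0 k))
    _ = r ^ 2 := by simp only [← sum_mul, ← sum_mul_sum, hx, hy, one_mul]

lemma exists_le_abs_doubleCenter [Nonempty ι] [Nonempty κ] {K : Matrix ι κ ℝ} {r : ℝ}
    (hr : r ∈ lowerBounds (additiveApproxBounds K)) : ∃ j k, r ≤ |doubleCenter x y K j k| := by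
  obtain ⟨⟨j, k⟩, hmax⟩ := Finite.exists_max fun p : ι × κ => |doubleCenter x y K p.1 p.2|
  refine ⟨j, k, hr ⟨abs_nonneg _, fun j => (K *ᵥ y) j,
    fun k => (x ᵥ* K) k - x ⬝ᵥ K *ᵥ y, fun j' k' => ?_⟩⟩
  refine le_trans (le_of_eq ?_) (hmax (j', k'))
  rw [doubleCenter_apply]
  congr 1
  ring

lemma sq_mul_sq_le_weightedInner_self {δ : ℝ} (hδ : 0 ≤ δ) (hxδ : ∀ j, δ ≤ x j)
    (hyδ : ∀ k, δ ≤ y k) (M : Matrix ι κ ℝ) (j : ι) (k : κ) :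
    δ ^ 2 * M j k ^ 2 ≤ weightedInner x y M M := by
  have hterm : ∀ j k, 0 ≤ x j * y k * M j k * M j k := fun j k => by
    rw [mul_assoc]; exact mul_nonneg (mul_nonneg (hδ.trans (hxδ j)) (hδ.trans (hyδ k)))
      (mul_self_nonneg _)
  calc δ ^ 2 * M j k ^ 2 ≤ x j * y k * M j k * M j k := by
        rw [mul_assoc, sq, sq]
        exact mul_le_mul_of_nonneg_right (mul_le_mul (hxδ j) (hyδ k) hδ (hδ.trans (hxδ j)))
          (mul_self_nonneg _)
    _ ≤ ∑ k', x j * y k' * M j k' * M j k' :=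
        single_le_sum (fun k' _ => hterm j k') (mem_univ k)
    _ ≤ weightedInner x y M M :=
        single_le_sum (f := fun j' => ∑ k', x j' * y k' * M j' k' * M j' k')
          (fun j' _ => sum_nonneg fun k' _ => hterm j' k') (mem_univ j)

lemma sq_mul_sq_le_weightedInner_doubleCenter [Nonempty ι] [Nonempty κ] {δ : ℝ} (hδ : 0 ≤ δ)
    (hxδ : ∀ j, δ ≤ x j) (hyδ : ∀ k, δ ≤ y k) {K : Matrix ι κ ℝ} {r : ℝ}
    (hr : IsLeast (additiveApproxBounds K) r) :
    δ ^ 2 * r ^ 2 ≤ weightedInner x y (doubleCenter x y K) (doubleCenter x y K) := by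
  obtain ⟨j, k, hjk⟩ := exists_le_abs_doubleCenter (x := x) (y := y) hr.2
  calc δ ^ 2 * r ^ 2 ≤ δ ^ 2 * |doubleCenter x y K j k| ^ 2 := by
        gcongr
        exact hr.1.1
    _ = δ ^ 2 * doubleCenter x y K j k ^ 2 := by rw [sq_abs]
    _ ≤ _ := sq_mul_sq_le_weightedInner_self hδ hxδ hyδ _ j k

end WeightedCentering

lemma cfun_eq_neg_weightedInner {n m : ℕ} {x : Fin n → ℝ} {y : Fin m → ℝ}
    (hx : ∑ j, x j = 1) (hy : ∑ k, y k = 1) (A B : Matrix (Fin n) (Fin m) ℝ) :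
    Cfun A B x y = -weightedInner x y (doubleCenter x y A) (doubleCenter x y B) := by
  rw [← sum_sum_sub_mulVec_mul_sub_vecMul hx hy]
  simp only [Cfun, vecMul, dotProduct, mulVec, mul_comm (x _)]

lemma cfun_add_sub {n m : ℕ} {x : Fin n → ℝ} {y : Fin m → ℝ}
    (hx : ∑ j, x j = 1) (hy : ∑ k, y k = 1) (Z C : Matrix (Fin n) (Fin m) ℝ) :
    Cfun (Z + C) (C - Z) x y =
      weightedInner x y (doubleCenter x y Z) (doubleCenter x y Z) -
        weightedInner x y (doubleCenter x y C) (doubleCenter x y C) := by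
  simp only [cfun_eq_neg_weightedInner hx hy, doubleCenter_add, doubleCenter_sub, weightedInner,
    Matrix.add_apply, Matrix.sub_apply, ← sum_sub_distrib, ← sum_neg_distrib]
  congr! 2 with j _ k _
  ring

theorem stmt13_general {n m : ℕ} (A B : Matrix (Fin n) (Fin m) ℝ) (θ δ : ℝ)
    (hδ : 0 < δ)
    (Z C : Matrix (Fin n) (Fin m) ℝ)
    (hZ : Z = (1/2 : ℝ) • (A - B)) (hC : C = (1/2 : ℝ) • (A + B))
    (rZ rC : ℝ)
    (hrZ : IsLeast {t : ℝ | 0 ≤ t ∧ ∃ (g : Fin n → ℝ) (h : Fin m → ℝ),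
      ∀ j k, |Z j k - g j - h k| ≤ t} rZ)
    (hrC : IsLeast {t : ℝ | 0 ≤ t ∧ ∃ (g : Fin n → ℝ) (h : Fin m → ℝ),
      ∀ j k, |C j k - g j - h k| ≤ t} rC)
    (hgap : rC^2 + (θ * δ)^2 ≤ (rZ * δ)^2)
    (x : Fin n → ℝ) (y : Fin m → ℝ) (hx : IsProbVec x) (hy : IsProbVec y)
    (hxδ : ∀ j, δ ≤ x j) (hyδ : ∀ k, δ ≤ y k) :
    θ^2 * δ^2 ≤ Cfun A B x y := by
  obtain ⟨hx0, hx1⟩ := hx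
  obtain ⟨hy0, hy1⟩ := hy
  have : Nonempty (Fin n) := univ_nonempty_iff.mp (nonempty_of_sum_ne_zero (hx1 ▸ one_ne_zero))
  have : Nonempty (Fin m) := univ_nonempty_iff.mp (nonempty_of_sum_ne_zero (hy1 ▸ one_ne_zero))
  have hA : A = Z + C := by rw [hZ, hC]; module
  have hB : B = C - Z := by rw [hZ, hC]; module
  have hZpart := sq_mul_sq_le_weightedInner_doubleCenter hδ.le hxδ hyδ hrZ
  have hCpart := weightedInner_doubleCenter_self_le_sq hx0 hy0 hx1 hy1 hrC.1
  rw [hA, hB, cfun_add_sub hx1 hy1]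
  linarith

theorem stmt13 {n m : ℕ} (A B : Matrix (Fin n) (Fin m) ℝ) (θ δ : ℝ)
    (hθ : 0 < θ) (hδ : 0 < δ)
    (Z C : Matrix (Fin n) (Fin m) ℝ)
    (hZ : Z = (1/2 : ℝ) • (A - B)) (hC : C = (1/2 : ℝ) • (A + B))
    (rZ rC : ℝ)
    (hrZ : IsLeast {t : ℝ | 0 ≤ t ∧ ∃ (g : Fin n → ℝ) (h : Fin m → ℝ),
      ∀ j k, |Z j k - g j - h k| ≤ t} rZ)
    (hrC : IsLeast {t : ℝ | 0 ≤ t ∧ ∃ (g : Fin n → ℝ) (h : Fin m → ℝ),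
      ∀ j k, |C j k - g j - h k| ≤ t} rC)
    (hgap : rC^2 + (θ * δ)^2 ≤ (rZ * δ)^2)
    (x : Fin n → ℝ) (y : Fin m → ℝ) (hx : IsProbVec x) (hy : IsProbVec y)
    (hxδ : ∀ j, δ ≤ x j) (hyδ : ∀ k, δ ≤ y k) :
    θ^2 * δ^2 ≤ Cfun A B x y :=
  stmt13_general A B θ δ hδ Z C hZ hC rZ rC hrZ hrC hgap x y hx hy hxδ hyδ
end
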